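/- arXiv:1311.1060 — 4 statements merged into one kernel-verified Lean document; each statement's English description precedes it below -/
import Mathlib

section
/- Let H, k₁, k₂, k₃, k₄ : [0,∞) → [0,∞) with lim_{t→∞} kᵢ(t) = 0 for i = 1,2, lim_{t→∞} H(t) = ∞, lim_{t→∞} k₃(t)/k₁(t) = 1 and lim_{t→∞} k₄(t)/k₂(t) = 1. Let Q(t; s₁, s₂) be a function on [0,∞) × [0,1]² that is nonincreasing in s₁ and in s₂. Suppose that for all λ₁, λ₂ ≥ 0, lim_{t→∞} H(t) Q(t; 1 - λ₁ k₁(t), 1 - λ₂ k₂(t)) = h(λ₁, λ₂), where h is continuous in both arguments. Then for all λ₁, λ₂ ≥ 0, lim_{t→∞} H(t) Q(t; e^{-λ₁ k₃(t)}, e^{-λ₂ k₄(t)}) = h(λ₁, λ₂). -/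
/-!
Since `1 - x ≤ e^{-x} ≤ 1 - x(1 - x/2)` and `k₃ ~ k₁`, `k₄ ~ k₂`, for every `c < 1 < c'` the
arguments `e^{-λᵢ k_{i+2}(t)}` eventually lie between `1 - c' λᵢ kᵢ(t)` and `1 - c λᵢ kᵢ(t)`.
Monotonicity of `Q` squeezes `H Q(t; e^{-λ₁k₃}, e^{-λ₂k₄})` between the quantities whose limits
are `h(cλ₁, cλ₂)` and `h(c'λ₁, c'λ₂)`, and continuity of `h` lets `c, c' → 1`.
-/

open Filter Set Topology Real

theorem tendsto_of_squeeze_by_family {ι α β : Type*} [TopologicalSpace β] [LinearOrder β]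
    [OrderTopology β] {p q : Filter ι} [p.NeBot] [q.NeBot] {l : Filter α}
    {f : α → β} {g : ι → α → β} {A : ι → β} {L : β}
    (hg : ∀ᶠ i in p ⊔ q, Tendsto (g i) l (𝓝 (A i))) (hA : Tendsto A (p ⊔ q) (𝓝 L))
    (hgf : ∀ᶠ i in p, ∀ᶠ t in l, g i t ≤ f t) (hfg : ∀ᶠ i in q, ∀ᶠ t in l, f t ≤ g i t) :
    Tendsto f l (𝓝 L) := by
  rw [tendsto_order]
  constructor
  · intro a ha
    obtain ⟨i, hai, hgi, hgfi⟩ := ((hA.mono_left le_sup_left).eventually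
      (eventually_gt_nhds ha)).and ((hg.filter_mono le_sup_left).and hgf) |>.exists
    filter_upwards [hgi.eventually (eventually_gt_nhds hai), hgfi] with t h₁ h₂
    exact h₁.trans_le h₂
  · intro a ha
    obtain ⟨i, hai, hgi, hfgi⟩ := ((hA.mono_left le_sup_right).eventually
      (eventually_lt_nhds ha)).and ((hg.filter_mono le_sup_right).and hfg) |>.exists
    filter_upwards [hgi.eventually (eventually_lt_nhds hai), hfgi] with t h₁ h₂
    exact h₂.trans_lt h₁

theorem tendsto_prod_of_squeeze_by_family {ι α β γ : Type*} [TopologicalSpace β] [LinearOrder β]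
    [OrderTopology β] [TopologicalSpace γ] [LinearOrder γ] [OrderTopology γ]
    {p q : Filter ι} [p.NeBot] [q.NeBot] {l : Filter α}
    {f : α → β × γ} {g : ι → α → β × γ} {A : ι → β × γ} {L : β × γ}
    (hg : ∀ᶠ i in p ⊔ q, Tendsto (g i) l (𝓝 (A i))) (hA : Tendsto A (p ⊔ q) (𝓝 L))
    (hgf : ∀ᶠ i in p, ∀ᶠ t in l, g i t ≤ f t) (hfg : ∀ᶠ i in q, ∀ᶠ t in l, f t ≤ g i t) :
    Tendsto f l (𝓝 L) := by
  have h₁ : Tendsto (fun t => (f t).1) l (𝓝 L.1) :=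
    tendsto_of_squeeze_by_family (g := fun i t => (g i t).1) (hg.mono fun _ => Tendsto.fst_nhds)
      hA.fst_nhds (hgf.mono fun _ h => h.mono fun _ h' => h'.1)
      (hfg.mono fun _ h => h.mono fun _ h' => h'.1)
  have h₂ : Tendsto (fun t => (f t).2) l (𝓝 L.2) :=
    tendsto_of_squeeze_by_family (g := fun i t => (g i t).2) (hg.mono fun _ => Tendsto.snd_nhds)
      hA.snd_nhds (hgf.mono fun _ h => h.mono fun _ h' => h'.2)
      (hfg.mono fun _ h => h.mono fun _ h' => h'.2)
  exact h₁.prodMk_nhds h₂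

theorem exp_neg_le_one_sub_add_sq_div_two {x : ℝ} (hx : 0 ≤ x) :
    exp (-x) ≤ 1 - x + x ^ 2 / 2 := by
  have hquad := quadratic_le_exp_of_nonneg hx
  have hprod : exp (-x) * exp x = 1 := by rw [← exp_add, neg_add_cancel, exp_zero]
  -- `(1 - x + x²/2)(1 + x + x²/2) = 1 + x⁴/4 ≥ 1`
  nlinarith [exp_pos (-x), sq_nonneg (x ^ 2)]

section RatioToOne

variable {α : Type*} {F : Filter α} {u v : α → ℝ} {c : ℝ}

theorem eventually_pos_of_tendsto_div_one (h : Tendsto (fun t => u t / v t) F (𝓝 1))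
    (hv : ∀ t, 0 ≤ v t) : ∀ᶠ t in F, 0 < v t := by
  filter_upwards [h.eventually_ne one_ne_zero] with t ht
  exact (hv t).lt_of_ne' (div_ne_zero_iff.mp ht).2

theorem eventually_le_mul_of_tendsto_div_one (h : Tendsto (fun t => u t / v t) F (𝓝 1))
    (hv : ∀ t, 0 ≤ v t) (hc : 1 < c) : ∀ᶠ t in F, u t ≤ c * v t := by
  filter_upwards [h.eventually (eventually_lt_nhds hc), eventually_pos_of_tendsto_div_one h hv]
    with t ht hvt
  exact (div_le_iff₀ hvt).mp ht.le

theorem eventually_mul_le_of_tendsto_div_one (h : Tendsto (fun t => u t / v t) F (𝓝 1))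
    (hv : ∀ t, 0 ≤ v t) (hc : c < 1) : ∀ᶠ t in F, c * v t ≤ u t := by
  filter_upwards [h.eventually (eventually_gt_nhds hc), eventually_pos_of_tendsto_div_one h hv]
    with t ht hvt
  exact (le_div_iff₀ hvt).mp ht.le

theorem tendsto_zero_of_tendsto_div_one (h : Tendsto (fun t => u t / v t) F (𝓝 1))
    (hv : Tendsto v F (𝓝 0)) : Tendsto u F (𝓝 0) := by
  have hmul : Tendsto (fun t => u t / v t * v t) F (𝓝 0) := by simpa using h.mul hv
  refine hmul.congr' ?_
  filter_upwards [h.eventually_ne one_ne_zero] with t ht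
  exact div_mul_cancel₀ _ (div_ne_zero_iff.mp ht).2

end RatioToOne

section ExpBracket

variable {α : Type*} {F : Filter α} {k k' : α → ℝ} {l c : ℝ}

theorem eventually_one_sub_mul_mem_Icc (hk : Tendsto k F (𝓝 0)) (hk0 : ∀ t, 0 ≤ k t)
    (hc : 0 ≤ c) : ∀ᶠ t in F, 1 - c * k t ∈ Icc (0 : ℝ) 1 := by
  have hlim : Tendsto (fun t => 1 - c * k t) F (𝓝 1) := by
    simpa using tendsto_const_nhds.sub (hk.const_mul c)
  filter_upwards [hlim.eventually (eventually_gt_nhds one_pos)] with t ht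
  exact ⟨ht.le, by nlinarith [hk0 t]⟩

theorem eventually_one_sub_mul_le_exp (hratio : Tendsto (fun t => k' t / k t) F (𝓝 1))
    (hk0 : ∀ t, 0 ≤ k t) (hl : 0 ≤ l) (hc : 1 < c) :
    ∀ᶠ t in F, 1 - c * l * k t ≤ exp (-(l * k' t)) := by
  filter_upwards [eventually_le_mul_of_tendsto_div_one hratio hk0 hc] with t ht
  calc 1 - c * l * k t ≤ 1 - l * k' t := by nlinarith [mul_le_mul_of_nonneg_left ht hl]
    _ ≤ exp (-(l * k' t)) := one_sub_le_exp_neg _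

theorem eventually_exp_le_one_sub_mul (hratio : Tendsto (fun t => k' t / k t) F (𝓝 1))
    (hk : Tendsto k F (𝓝 0)) (hk0 : ∀ t, 0 ≤ k t) (hk'0 : ∀ t, 0 ≤ k' t) (hl : 0 ≤ l)
    (hc : c < 1) : ∀ᶠ t in F, exp (-(l * k' t)) ≤ 1 - c * l * k t := by
  have hk' := tendsto_zero_of_tendsto_div_one hratio hk
  -- `1 - e^{-x} ≥ x (1 - x/2)` with `x = l k'`, and `k' (1 - l k'/2)` is still equivalent to `k`
  have hratio' : Tendsto (fun t => k' t * (1 - l * k' t / 2) / k t) F (𝓝 1) := by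
    have := hratio.mul ((tendsto_const_nhds (x := (1 : ℝ))).sub ((hk'.const_mul l).div_const 2))
    simpa only [mul_div_right_comm, mul_zero, zero_div, sub_zero, mul_one] using this
  filter_upwards [eventually_mul_le_of_tendsto_div_one hratio' hk0 hc] with t ht
  calc exp (-(l * k' t)) ≤ 1 - l * k' t + (l * k' t) ^ 2 / 2 :=
        exp_neg_le_one_sub_add_sq_div_two (mul_nonneg hl (hk'0 t))
    _ = 1 - l * (k' t * (1 - l * k' t / 2)) := by ring
    _ ≤ 1 - c * l * k t := by nlinarith [mul_le_mul_of_nonneg_left ht hl]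

theorem exp_neg_mem_Icc {x : ℝ} (hx : 0 ≤ x) : exp (-x) ∈ Icc (0 : ℝ) 1 :=
  ⟨(exp_pos _).le, exp_le_one_iff.mpr (neg_nonpos.mpr hx)⟩

theorem eventually_mem_Icc_and_exp_le_one_sub_mul
    (hratio : Tendsto (fun t => k' t / k t) F (𝓝 1)) (hk : Tendsto k F (𝓝 0))
    (hk0 : ∀ t, 0 ≤ k t) (hk'0 : ∀ t, 0 ≤ k' t) (hl : 0 ≤ l) (hc : c ∈ Ioo 0 1) :
    ∀ᶠ t in F, exp (-(l * k' t)) ∈ Icc (0 : ℝ) 1 ∧ 1 - c * l * k t ∈ Icc (0 : ℝ) 1 ∧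
      exp (-(l * k' t)) ≤ 1 - c * l * k t := by
  filter_upwards [eventually_one_sub_mul_mem_Icc hk hk0 (mul_nonneg hc.1.le hl),
    eventually_exp_le_one_sub_mul hratio hk hk0 hk'0 hl hc.2] with t hmem hle
  exact ⟨exp_neg_mem_Icc (mul_nonneg hl (hk'0 t)), hmem, hle⟩

theorem eventually_mem_Icc_and_one_sub_mul_le_exp
    (hratio : Tendsto (fun t => k' t / k t) F (𝓝 1)) (hk : Tendsto k F (𝓝 0))
    (hk0 : ∀ t, 0 ≤ k t) (hk'0 : ∀ t, 0 ≤ k' t) (hl : 0 ≤ l) (hc : 1 < c) :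
    ∀ᶠ t in F, exp (-(l * k' t)) ∈ Icc (0 : ℝ) 1 ∧ 1 - c * l * k t ∈ Icc (0 : ℝ) 1 ∧
      1 - c * l * k t ≤ exp (-(l * k' t)) := by
  filter_upwards [eventually_one_sub_mul_mem_Icc hk hk0 (mul_nonneg (zero_le_one.trans hc.le) hl),
    eventually_one_sub_mul_le_exp hratio hk0 hl hc] with t hmem hle
  exact ⟨exp_neg_mem_Icc (mul_nonneg hl (hk'0 t)), hmem, hle⟩

end ExpBracket

theorem LRed_general (H k₁ k₂ k₃ k₄ : ℝ → ℝ) (Q : ℝ → ℝ → ℝ → ℝ × ℝ) (h : ℝ → ℝ → ℝ × ℝ)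
    (hHnn : ∀ t, 0 ≤ H t)
    (hknn : ∀ t, 0 ≤ k₁ t ∧ 0 ≤ k₂ t ∧ 0 ≤ k₃ t ∧ 0 ≤ k₄ t)
    (hk1 : Tendsto k₁ atTop (nhds 0)) (hk2 : Tendsto k₂ atTop (nhds 0))
    (hk31 : Tendsto (fun t => k₃ t / k₁ t) atTop (nhds 1))
    (hk42 : Tendsto (fun t => k₄ t / k₂ t) atTop (nhds 1))
    (hmono : ∀ t, ∀ s₁ s₂ s₁' s₂' : ℝ, s₁ ∈ Set.Icc (0:ℝ) 1 → s₂ ∈ Set.Icc (0:ℝ) 1 →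
      s₁' ∈ Set.Icc (0:ℝ) 1 → s₂' ∈ Set.Icc (0:ℝ) 1 →
      s₁ ≤ s₁' → s₂ ≤ s₂' → Q t s₁' s₂' ≤ Q t s₁ s₂)
    (hcont : Continuous fun p : ℝ × ℝ => h p.1 p.2)
    (hlim : ∀ l₁ l₂ : ℝ, 0 ≤ l₁ → 0 ≤ l₂ →
      Tendsto (fun t => H t • Q t (1 - l₁ * k₁ t) (1 - l₂ * k₂ t)) atTop (nhds (h l₁ l₂))) :
    ∀ l₁ l₂ : ℝ, 0 ≤ l₁ → 0 ≤ l₂ →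
      Tendsto (fun t => H t • Q t (Real.exp (-(l₁ * k₃ t))) (Real.exp (-(l₂ * k₄ t))))
        atTop (nhds (h l₁ l₂)) := by
  intro l₁ l₂ hl₁ hl₂
  obtain ⟨hk₁, hk₂, hk₃, hk₄⟩ : (∀ t, 0 ≤ k₁ t) ∧ (∀ t, 0 ≤ k₂ t) ∧ (∀ t, 0 ≤ k₃ t) ∧
      (∀ t, 0 ≤ k₄ t) :=
    ⟨fun t => (hknn t).1, fun t => (hknn t).2.1, fun t => (hknn t).2.2.1, fun t => (hknn t).2.2.2⟩
  have hnhds : 𝓝[<] (1 : ℝ) ⊔ 𝓝[>] 1 ≤ 𝓝 1 := sup_le nhdsWithin_le_nhds nhdsWithin_le_nhds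
  have hA : Tendsto (fun c : ℝ => h (c * l₁) (c * l₂)) (𝓝 1) (𝓝 (h l₁ l₂)) := by
    simpa [Function.comp_def] using
      (hcont.comp (by fun_prop : Continuous fun c : ℝ => (c * l₁, c * l₂))).tendsto 1
  refine tendsto_prod_of_squeeze_by_family (p := 𝓝[<] 1) (q := 𝓝[>] 1)
    (g := fun c t => H t • Q t (1 - c * l₁ * k₁ t) (1 - c * l₂ * k₂ t)) ?_ (hA.mono_left hnhds)
    ?_ ?_
  · filter_upwards [hnhds (eventually_gt_nhds one_pos)] with c hc
    exact hlim _ _ (mul_nonneg hc.le hl₁) (mul_nonneg hc.le hl₂)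
  · filter_upwards [Ioo_mem_nhdsLT one_pos] with c hc
    filter_upwards [eventually_mem_Icc_and_exp_le_one_sub_mul hk31 hk1 hk₁ hk₃ hl₁ hc,
      eventually_mem_Icc_and_exp_le_one_sub_mul hk42 hk2 hk₂ hk₄ hl₂ hc]
      with t ⟨he₁, hs₁, h₁⟩ ⟨he₂, hs₂, h₂⟩
    exact smul_le_smul_of_nonneg_left (hmono t _ _ _ _ he₁ he₂ hs₁ hs₂ h₁ h₂) (hHnn t)
  · filter_upwards [self_mem_nhdsWithin] with c hc
    filter_upwards [eventually_mem_Icc_and_one_sub_mul_le_exp hk31 hk1 hk₁ hk₃ hl₁ hc,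
      eventually_mem_Icc_and_one_sub_mul_le_exp hk42 hk2 hk₂ hk₄ hl₂ hc]
      with t ⟨he₁, hs₁, h₁⟩ ⟨he₂, hs₂, h₂⟩
    exact smul_le_smul_of_nonneg_left (hmono t _ _ _ _ hs₁ hs₂ he₁ he₂ h₁ h₂) (hHnn t)

/-- Lemma (LRed): if `H(t)Q(t; 1-λ₁k₁(t), 1-λ₂k₂(t)) → h(λ₁,λ₂)` with `h` continuous,
`Q` nonincreasing in each of its last two arguments (on `[0,1]²`), `kᵢ → 0`, `H → ∞`,
and `k₃/k₁ → 1`, `k₄/k₂ → 1`, then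
`H(t)Q(t; e^{-λ₁k₃(t)}, e^{-λ₂k₄(t)}) → h(λ₁,λ₂)` for all `λ₁, λ₂ ≥ 0`. -/
theorem LRed (H k₁ k₂ k₃ k₄ : ℝ → ℝ) (Q : ℝ → ℝ → ℝ → ℝ × ℝ) (h : ℝ → ℝ → ℝ × ℝ)
    (hHnn : ∀ t, 0 ≤ H t)
    (hknn : ∀ t, 0 ≤ k₁ t ∧ 0 ≤ k₂ t ∧ 0 ≤ k₃ t ∧ 0 ≤ k₄ t)
    (hk1 : Tendsto k₁ atTop (nhds 0)) (hk2 : Tendsto k₂ atTop (nhds 0))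
    (hH : Tendsto H atTop atTop)
    (hk31 : Tendsto (fun t => k₃ t / k₁ t) atTop (nhds 1))
    (hk42 : Tendsto (fun t => k₄ t / k₂ t) atTop (nhds 1))
    (hmono : ∀ t, ∀ s₁ s₂ s₁' s₂' : ℝ, s₁ ∈ Set.Icc (0:ℝ) 1 → s₂ ∈ Set.Icc (0:ℝ) 1 →
      s₁' ∈ Set.Icc (0:ℝ) 1 → s₂' ∈ Set.Icc (0:ℝ) 1 →
      s₁ ≤ s₁' → s₂ ≤ s₂' → Q t s₁' s₂' ≤ Q t s₁ s₂)
    (hcont : Continuous fun p : ℝ × ℝ => h p.1 p.2)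
    (hlim : ∀ l₁ l₂ : ℝ, 0 ≤ l₁ → 0 ≤ l₂ →
      Tendsto (fun t => H t • Q t (1 - l₁ * k₁ t) (1 - l₂ * k₂ t)) atTop (nhds (h l₁ l₂))) :
    ∀ l₁ l₂ : ℝ, 0 ≤ l₁ → 0 ≤ l₂ →
      Tendsto (fun t => H t • Q t (Real.exp (-(l₁ * k₃ t))) (Real.exp (-(l₂ * k₄ t))))
        atTop (nhds (h l₁ l₂)) :=
  LRed_general H k₁ k₂ k₃ k₄ Q h hHnn hknn hk1 hk2 hk31 hk42 hmono hcont hlim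
end

section
/- Let β ∈ (0,1], let D be a 2×2 matrix with positive entries, let N : ℝ² → ℝ² be a map with components Nᵢ(x) = (1/2)Σ_{j,k} b^i_{jk} x_j x_k for nonnegative coefficients b^i_{jk}, and let Γ_β > 0 be a constant. Then there exists Λ > 0 such that the equation Θ(λ) = D(0,1)^† − Γ_β λ^β ∫₀¹ D N(Θ(λ(1−y))) d(y^β) has a unique solution Θ in the class of continuous functions from [0, Λ] to [0,∞)², and this solution satisfies 0 ≤ Θ(λ) ≤ D(0,1)^† for all λ ∈ [0, Λ]. -/
/-!
Write the equation as `Θ(λ) = c - Γ λ^β ∫₀¹ w(y) F(Θ(λ(1-y))) dy` with `c = D(0,1)ᵀ`, `F = D ∘ N`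
and `w(y) = β y^(β-1)`, so that integrating against `w(y) dy` is integrating against `d(y^β)`.
Since `F ≥ 0` on the nonnegative cone, every nonnegative solution satisfies `Θ ≤ c`, so the
nonnegative solutions are the fixed points of the right-hand side in the box `0 ≤ θ ≤ c` of
`C([0, Λ], ℝ²)`. The polynomial map `F` is bounded by some `C` and `L`-Lipschitz on this compact
box; with `W = ∫₀¹ w`, once `Γ Λ^β W C ≤ min c` and `Γ Λ^β W L < 1` the right-hand side maps the
box into itself and is a contraction there, and Banach's fixed point theorem concludes.
-/

open Filter Set intervalIntegral

/-- The quadratic map `N` with components `Nᵢ(x) = (1/2)Σ_{j,k} b^i_{jk} x_j x_k`. -/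
noncomputable def quadMap (b : Fin 2 → Fin 2 → Fin 2 → ℝ) (x : Fin 2 → ℝ) : Fin 2 → ℝ :=
  fun i => (1 / 2) * ∑ j, ∑ k, b i j k * x j * x k

open MeasureTheory Topology

section Volterra

variable {ι : Type*} {β Γ Λ : ℝ} {w : ℝ → ℝ} {F : (ι → ℝ) → ι → ℝ} {c : ι → ℝ}

noncomputable def volterraIntegral (w : ℝ → ℝ) (F : (ι → ℝ) → ι → ℝ) (θ : ℝ → ι → ℝ) (l : ℝ)
    (i : ι) : ℝ :=
  ∫ y in (0:ℝ)..1, w y * F (θ (l * (1 - y))) i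

noncomputable def volterraRHS (β Γ : ℝ) (w : ℝ → ℝ) (F : (ι → ℝ) → ι → ℝ) (c : ι → ℝ)
    (θ : ℝ → ι → ℝ) (l : ℝ) (i : ι) : ℝ :=
  c i - Γ * l ^ β * volterraIntegral w F θ l i

lemma mul_one_sub_mem_Icc {l y : ℝ} (hl : l ∈ Icc 0 Λ) (hy : y ∈ Icc (0:ℝ) 1) :
    l * (1 - y) ∈ Icc 0 Λ :=
  ⟨mul_nonneg hl.1 (sub_nonneg.2 hy.2),
    (mul_le_of_le_one_right hl.1 (sub_le_self 1 hy.1)).trans hl.2⟩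

lemma volterraRHS_congr {θ₁ θ₂ : ℝ → ι → ℝ} (h : EqOn θ₁ θ₂ (Icc 0 Λ)) {l : ℝ}
    (hl : l ∈ Icc 0 Λ) (i : ι) :
    volterraRHS β Γ w F c θ₁ l i = volterraRHS β Γ w F c θ₂ l i := by
  unfold volterraRHS volterraIntegral
  congr 2
  refine integral_congr fun y hy => ?_
  rw [uIcc_of_le zero_le_one] at hy
  simp only [h (mul_one_sub_mem_Icc hl hy)]

lemma volterraIntegral_nonneg (hw0 : ∀ y ∈ Icc (0:ℝ) 1, 0 ≤ w y)
    (hF0 : ∀ x, 0 ≤ x → 0 ≤ F x) {θ : ℝ → ι → ℝ} (hθ : ∀ x ∈ Icc 0 Λ, 0 ≤ θ x) {l : ℝ}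
    (hl : l ∈ Icc 0 Λ) (i : ι) : 0 ≤ volterraIntegral w F θ l i :=
  integral_nonneg zero_le_one fun y hy =>
    mul_nonneg (hw0 y hy) (hF0 _ (hθ _ (mul_one_sub_mem_Icc hl hy)) i)

lemma volterraRHS_le (hΓ : 0 ≤ Γ) (hw0 : ∀ y ∈ Icc (0:ℝ) 1, 0 ≤ w y)
    (hF0 : ∀ x, 0 ≤ x → 0 ≤ F x) {θ : ℝ → ι → ℝ} (hθ : ∀ x ∈ Icc 0 Λ, 0 ≤ θ x) {l : ℝ}
    (hl : l ∈ Icc 0 Λ) (i : ι) : volterraRHS β Γ w F c θ l i ≤ c i :=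
  sub_le_self _ <| mul_nonneg (mul_nonneg hΓ (Real.rpow_nonneg hl.1 β))
    (volterraIntegral_nonneg hw0 hF0 hθ hl i)

lemma abs_integral_weight_mul_le (hw : IntervalIntegrable w volume 0 1)
    (hw0 : ∀ y ∈ Icc (0:ℝ) 1, 0 ≤ w y) {f : ℝ → ℝ} {M : ℝ} (hf : ∀ y, |f y| ≤ M) :
    |∫ y in (0:ℝ)..1, w y * f y| ≤ (∫ y in (0:ℝ)..1, w y) * M := by
  rw [← intervalIntegral.integral_mul_const, ← Real.norm_eq_abs]
  refine norm_integral_le_of_norm_le zero_le_one (ae_of_all _ fun y hy => ?_) (hw.mul_const M)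
  rw [Real.norm_eq_abs, abs_mul, abs_of_nonneg (hw0 y (Ioc_subset_Icc_self hy))]
  exact mul_le_mul_of_nonneg_left (hf y) (hw0 y (Ioc_subset_Icc_self hy))

lemma abs_volterraIntegral_le [Fintype ι] (hw : IntervalIntegrable w volume 0 1)
    (hw0 : ∀ y ∈ Icc (0:ℝ) 1, 0 ≤ w y) {θ : ℝ → ι → ℝ} {C : ℝ} (hC : ∀ x, ‖F (θ x)‖ ≤ C)
    (l : ℝ) (i : ι) : |volterraIntegral w F θ l i| ≤ (∫ y in (0:ℝ)..1, w y) * C :=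
  abs_integral_weight_mul_le hw hw0 fun _ => (norm_le_pi_norm (F _) i).trans (hC _)

lemma abs_volterraIntegral_sub_le [Fintype ι] (hw : IntervalIntegrable w volume 0 1)
    (hw0 : ∀ y ∈ Icc (0:ℝ) 1, 0 ≤ w y) {θ₁ θ₂ : ℝ → ι → ℝ}
    (h₁ : Continuous fun x => F (θ₁ x)) (h₂ : Continuous fun x => F (θ₂ x)) {K : ℝ}
    (hK : ∀ x, ‖F (θ₁ x) - F (θ₂ x)‖ ≤ K) (l : ℝ) (i : ι) :
    |volterraIntegral w F θ₁ l i - volterraIntegral w F θ₂ l i|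
      ≤ (∫ y in (0:ℝ)..1, w y) * K := by
  have hint : ∀ θ : ℝ → ι → ℝ, (Continuous fun x => F (θ x)) →
      IntervalIntegrable (fun y => w y * F (θ (l * (1 - y))) i) volume 0 1 := fun θ hθ =>
    hw.mul_continuousOn ((continuous_apply i).comp (hθ.comp (by fun_prop))).continuousOn
  unfold volterraIntegral
  rw [← integral_sub (hint θ₁ h₁) (hint θ₂ h₂)]
  simp_rw [← mul_sub]
  exact abs_integral_weight_mul_le hw hw0 fun _ =>
    (norm_le_pi_norm (F _ - F _) i).trans (hK _)

lemma continuous_volterraRHS [Fintype ι] (hβ : 0 ≤ β) (hw : IntervalIntegrable w volume 0 1)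
    {θ : ℝ → ι → ℝ} (hθ : Continuous fun x => F (θ x)) {C : ℝ} (hC : ∀ x, ‖F (θ x)‖ ≤ C)
    (i : ι) : Continuous fun l => volterraRHS β Γ w F c θ l i := by
  refine continuous_const.sub ((continuous_const.mul (Real.continuous_rpow_const hβ)).mul ?_)
  have hθi : ∀ l : ℝ, Continuous fun y : ℝ => F (θ (l * (1 - y))) i := fun l =>
    (continuous_apply i).comp (hθ.comp (by fun_prop))
  refine continuous_of_dominated_interval (bound := fun y => |w y| * C)
    (fun l => (hw.mul_continuousOn (hθi l).continuousOn).def'.aestronglyMeasurable)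
    (fun l => ae_of_all _ fun y _ => ?_) (hw.abs.mul_const C) (ae_of_all _ fun y _ => ?_)
  · rw [Real.norm_eq_abs, abs_mul]
    exact mul_le_mul_of_nonneg_left ((norm_le_pi_norm (F _) i).trans (hC _)) (abs_nonneg _)
  · exact continuous_const.mul ((continuous_apply i).comp (hθ.comp (by fun_prop)))

lemma eventually_mul_rpow_mul_lt (hβ : 0 < β) (Γ M : ℝ) {ε : ℝ} (hε : 0 < ε) :
    ∀ᶠ Λ in 𝓝[>] 0, Γ * Λ ^ β * M < ε := by
  have h : Tendsto (fun Λ : ℝ => Γ * Λ ^ β * M) (𝓝 0) (𝓝 0) := by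
    simpa [Real.zero_rpow hβ.ne'] using
      (((Real.continuousAt_rpow_const 0 β (Or.inr hβ.le)).const_mul Γ).mul_const M).tendsto
  exact eventually_nhdsWithin_of_eventually_nhds (h.eventually (eventually_lt_nhds hε))

section Picard

variable [Fintype ι]

-- `IccExtend` continues `θ` by constants outside `[0, Λ]`; by `volterraRHS_congr` this never
-- affects the values on `[0, Λ]`.
noncomputable def picardMap (Γ : ℝ) (c : ι → ℝ) (hΛ : 0 ≤ Λ) (hβ : 0 ≤ β)
    (hw : IntervalIntegrable w volume 0 1) (hF : Continuous F) (θ : C(Icc 0 Λ, ι → ℝ)) :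
    C(Icc 0 Λ, ι → ℝ) where
  toFun t i := volterraRHS β Γ w F c (IccExtend hΛ θ) t i
  continuous_toFun := by
    obtain ⟨C, hC⟩ :=
      isCompact_univ.exists_bound_of_continuousOn (hF.comp θ.continuous).continuousOn
    exact continuous_pi fun i => (continuous_volterraRHS hβ hw
      (hF.comp (continuous_IccExtend_iff.2 θ.continuous)) (fun _ => hC _ (mem_univ _)) i).comp
      continuous_subtype_val

variable (hΛ : 0 ≤ Λ) (hβ : 0 ≤ β) (hw : IntervalIntegrable w volume 0 1) (hF : Continuous F)

lemma picardMap_apply (θ : C(Icc 0 Λ, ι → ℝ)) (t : Icc 0 Λ) (i : ι) :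
    picardMap Γ c hΛ hβ hw hF θ t i = volterraRHS β Γ w F c (IccExtend hΛ θ) t i :=
  rfl

lemma picardMap_eq_self_iff {θ : C(Icc 0 Λ, ι → ℝ)} :
    picardMap Γ c hΛ hβ hw hF θ = θ ↔
      ∀ l ∈ Icc 0 Λ, ∀ i, IccExtend hΛ θ l i = volterraRHS β Γ w F c (IccExtend hΛ θ) l i := by
  constructor
  · intro h l hl i
    calc IccExtend hΛ θ l i = θ ⟨l, hl⟩ i := by rw [IccExtend_of_mem hΛ θ hl]
      _ = picardMap Γ c hΛ hβ hw hF θ ⟨l, hl⟩ i := by rw [h]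
  · intro h
    ext t i
    rw [picardMap_apply, ← h t t.2 i, IccExtend_val]

lemma picardMap_mem_Icc (hΓ : 0 ≤ Γ) (hw0 : ∀ y ∈ Icc (0:ℝ) 1, 0 ≤ w y)
    (hF0 : ∀ x, 0 ≤ x → 0 ≤ F x) {C : ℝ} (hC : ∀ x ∈ Icc 0 c, ‖F x‖ ≤ C)
    (hsmall : ∀ i, Γ * Λ ^ β * ((∫ y in (0:ℝ)..1, w y) * C) ≤ c i)
    {θ : C(Icc 0 Λ, ι → ℝ)} (hθ : ∀ t, θ t ∈ Icc 0 c) (t : Icc 0 Λ) :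
    picardMap Γ c hΛ hβ hw hF θ t ∈ Icc 0 c := by
  have hθ₀ : ∀ x ∈ Icc 0 Λ, 0 ≤ IccExtend hΛ θ x := fun _ _ => (hθ _).1
  refine ⟨fun i => ?_, fun i => volterraRHS_le hΓ hw0 hF0 hθ₀ t.2 i⟩
  have hI := abs_volterraIntegral_le (θ := IccExtend hΛ θ) hw hw0 (fun x => hC _ (hθ _)) t i
  have hΓt : Γ * (t : ℝ) ^ β ≤ Γ * Λ ^ β :=
    mul_le_mul_of_nonneg_left (Real.rpow_le_rpow t.2.1 t.2.2 hβ) hΓ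
  have := mul_le_mul hΓt ((le_abs_self _).trans hI) (volterraIntegral_nonneg hw0 hF0 hθ₀ t.2 i)
    (mul_nonneg hΓ (Real.rpow_nonneg hΛ β))
  rw [Pi.zero_apply, picardMap_apply, volterraRHS]
  linarith [hsmall i]

lemma dist_picardMap_le (hΓ : 0 ≤ Γ) (hw0 : ∀ y ∈ Icc (0:ℝ) 1, 0 ≤ w y) {L : NNReal}
    (hL : LipschitzOnWith L F (Icc 0 c)) {θ₁ θ₂ : C(Icc 0 Λ, ι → ℝ)}
    (h₁ : ∀ t, θ₁ t ∈ Icc 0 c) (h₂ : ∀ t, θ₂ t ∈ Icc 0 c) :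
    dist (picardMap Γ c hΛ hβ hw hF θ₁) (picardMap Γ c hΛ hβ hw hF θ₂)
      ≤ Γ * Λ ^ β * ((∫ y in (0:ℝ)..1, w y) * L) * dist θ₁ θ₂ := by
  have hW : 0 ≤ ∫ y in (0:ℝ)..1, w y := integral_nonneg zero_le_one hw0
  have hΓΛ : 0 ≤ Γ * Λ ^ β := mul_nonneg hΓ (Real.rpow_nonneg hΛ β)
  have hk : 0 ≤ Γ * Λ ^ β * ((∫ y in (0:ℝ)..1, w y) * L) * dist θ₁ θ₂ :=
    mul_nonneg (mul_nonneg hΓΛ (mul_nonneg hW L.2)) dist_nonneg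
  refine (ContinuousMap.dist_le hk).2 fun t => (dist_pi_le_iff hk).2 fun i => ?_
  have hdiff := abs_volterraIntegral_sub_le (θ₁ := IccExtend hΛ θ₁) (θ₂ := IccExtend hΛ θ₂) hw hw0
    (hF.comp (continuous_IccExtend_iff.2 θ₁.continuous))
    (hF.comp (continuous_IccExtend_iff.2 θ₂.continuous)) (K := L * dist θ₁ θ₂)
    (fun x => by
      rw [← dist_eq_norm]
      exact (hL.dist_le_mul _ (h₁ _) _ (h₂ _)).trans
        (mul_le_mul_of_nonneg_left (ContinuousMap.dist_apply_le_dist _) L.2)) t i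
  have hΓt : Γ * (t : ℝ) ^ β ≤ Γ * Λ ^ β :=
    mul_le_mul_of_nonneg_left (Real.rpow_le_rpow t.2.1 t.2.2 hβ) hΓ
  rw [Real.dist_eq, picardMap_apply, picardMap_apply, volterraRHS, volterraRHS,
    sub_sub_sub_cancel_left, ← mul_sub, abs_mul, abs_sub_comm,
    abs_of_nonneg (mul_nonneg hΓ (Real.rpow_nonneg t.2.1 β))]
  calc _ ≤ Γ * Λ ^ β * ((∫ y in (0:ℝ)..1, w y) * (L * dist θ₁ θ₂)) :=
        mul_le_mul hΓt hdiff (abs_nonneg _) hΓΛ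
    _ = _ := by ring

lemma exists_fixedPoint_picardMap (hΓ : 0 ≤ Γ) (hw0 : ∀ y ∈ Icc (0:ℝ) 1, 0 ≤ w y)
    (hF0 : ∀ x, 0 ≤ x → 0 ≤ F x) (hc : 0 ≤ c) {C : ℝ} (hC : ∀ x ∈ Icc 0 c, ‖F x‖ ≤ C)
    {L : NNReal} (hL : LipschitzOnWith L F (Icc 0 c))
    (hsmall : ∀ i, Γ * Λ ^ β * ((∫ y in (0:ℝ)..1, w y) * C) ≤ c i)
    (hk : Γ * Λ ^ β * ((∫ y in (0:ℝ)..1, w y) * L) < 1) :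
    ∃ θ : C(Icc 0 Λ, ι → ℝ), (∀ t, θ t ∈ Icc 0 c) ∧ picardMap Γ c hΛ hβ hw hF θ = θ ∧
      ∀ θ' : C(Icc 0 Λ, ι → ℝ), (∀ t, θ' t ∈ Icc 0 c) →
        picardMap Γ c hΛ hβ hw hF θ' = θ' → θ' = θ := by
  set S := {θ : C(Icc 0 Λ, ι → ℝ) | ∀ t, θ t ∈ Icc 0 c}
  have hS : IsClosed S := by
    simp only [S, ofPred_forall]
    exact isClosed_iInter fun t => isClosed_Icc.preimage (continuous_eval_const t)
  have : CompleteSpace S := hS.completeSpace_coe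
  have : Nonempty S := ⟨⟨ContinuousMap.const _ c, fun _ => ⟨hc, le_rfl⟩⟩⟩
  have hmaps : MapsTo (picardMap Γ c hΛ hβ hw hF) S S := fun θ hθ =>
    picardMap_mem_Icc hΛ hβ hw hF hΓ hw0 hF0 hC hsmall hθ
  have hk0 : 0 ≤ Γ * Λ ^ β * ((∫ y in (0:ℝ)..1, w y) * L) :=
    mul_nonneg (mul_nonneg hΓ (Real.rpow_nonneg hΛ β))
      (mul_nonneg (integral_nonneg zero_le_one hw0) L.2)
  have hcontr : ContractingWith ⟨_, hk0⟩ (hmaps.restrict _ S S) :=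
    ⟨hk, LipschitzWith.of_dist_le_mul fun θ₁ θ₂ =>
      dist_picardMap_le hΛ hβ hw hF hΓ hw0 hL θ₁.2 θ₂.2⟩
  refine ⟨_, (ContractingWith.fixedPoint _ hcontr).2,
    congrArg Subtype.val hcontr.fixedPoint_isFixedPt, fun θ' hθ' hfix => ?_⟩
  exact congrArg Subtype.val
    (hcontr.fixedPoint_unique' (x := ⟨θ', hθ'⟩) (Subtype.ext hfix) hcontr.fixedPoint_isFixedPt)

end Picard

theorem exists_unique_volterra_solution [Fintype ι] (hβ : 0 < β) (hΓ : 0 ≤ Γ)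
    (hw : IntervalIntegrable w volume 0 1) (hw0 : ∀ y ∈ Icc (0:ℝ) 1, 0 ≤ w y)
    (hF : LocallyLipschitz F) (hF0 : ∀ x, 0 ≤ x → 0 ≤ F x) (hc : ∀ i, 0 < c i) :
    ∃ Λ > (0:ℝ), ∃ Θ : ℝ → ι → ℝ,
      (∀ i, ContinuousOn (fun l => Θ l i) (Icc 0 Λ)) ∧
      (∀ l ∈ Icc 0 Λ, ∀ i, 0 ≤ Θ l i ∧ Θ l i ≤ c i) ∧
      (∀ l ∈ Icc 0 Λ, ∀ i, Θ l i = volterraRHS β Γ w F c Θ l i) ∧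
      ∀ Θ' : ℝ → ι → ℝ, (∀ i, ContinuousOn (fun l => Θ' l i) (Icc 0 Λ)) →
        (∀ l ∈ Icc 0 Λ, ∀ i, 0 ≤ Θ' l i) →
        (∀ l ∈ Icc 0 Λ, ∀ i, Θ' l i = volterraRHS β Γ w F c Θ' l i) →
        ∀ l ∈ Icc 0 Λ, ∀ i, Θ' l i = Θ l i := by
  obtain ⟨C, hC⟩ := (isCompact_Icc (a := 0) (b := c)).exists_bound_of_continuousOn
    hF.continuous.continuousOn
  obtain ⟨L, hL⟩ := hF.locallyLipschitzOn.exists_lipschitzOnWith_of_compact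
    (isCompact_Icc (a := 0) (b := c))
  obtain ⟨Λ, ⟨hsmall, hk⟩, hΛ⟩ :=
    (((eventually_all.2 fun i => eventually_mul_rpow_mul_lt hβ Γ _ (hc i)).and
      (eventually_mul_rpow_mul_lt hβ Γ _ one_pos)).and self_mem_nhdsWithin).exists
  obtain ⟨θ, hθ, hfix, huniq⟩ := exists_fixedPoint_picardMap hΛ.le hβ.le hw hF.continuous hΓ hw0
    hF0 (fun i => (hc i).le) hC hL (fun i => (hsmall i).le) hk
  refine ⟨Λ, hΛ, IccExtend hΛ.le θ,
    fun i => ((continuous_apply i).comp (continuous_IccExtend_iff.2 θ.continuous)).continuousOn,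
    fun l _ i => ⟨(hθ _).1 i, (hθ _).2 i⟩, (picardMap_eq_self_iff ..).1 hfix,
    fun Θ' hcont hpos hsol l hl i => ?_⟩
  let θ' : C(Icc 0 Λ, ι → ℝ) :=
    ⟨(Icc 0 Λ).domRestrict Θ', continuous_pi fun i => (hcont i).domRestrict⟩
  have hext : EqOn (IccExtend hΛ.le θ') Θ' (Icc 0 Λ) := fun l hl => IccExtend_of_mem _ _ hl
  have hθ' : ∀ t, θ' t ∈ Icc 0 c := fun t =>
    ⟨hpos t t.2, fun i => (hsol t t.2 i).trans_le (volterraRHS_le hΓ hw0 hF0 hpos t.2 i)⟩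
  have hfix' : picardMap Γ c hΛ.le hβ.le hw hF.continuous θ' = θ' :=
    (picardMap_eq_self_iff ..).2 fun l hl i => by
      rw [hext hl, volterraRHS_congr hext hl, ← hsol l hl i]
  rw [← hext hl, huniq θ' hθ' hfix']

end Volterra

lemma quadMap_nonneg {b : Fin 2 → Fin 2 → Fin 2 → ℝ} (hb : ∀ i j k, 0 ≤ b i j k)
    {x : Fin 2 → ℝ} (hx : 0 ≤ x) : 0 ≤ quadMap b x := fun i =>
  mul_nonneg (by norm_num) (Finset.sum_nonneg fun j _ => Finset.sum_nonneg fun k _ =>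
    mul_nonneg (mul_nonneg (hb i j k) (hx j)) (hx k))

lemma contDiff_quadMap (b : Fin 2 → Fin 2 → Fin 2 → ℝ) {n : WithTop ℕ∞} :
    ContDiff ℝ n (quadMap b) :=
  contDiff_pi.2 fun i => by unfold quadMap; fun_prop

lemma Matrix.mulVec_nonneg {m n R : Type*} [Fintype n] [Semiring R] [PartialOrder R]
    [IsOrderedRing R] {M : Matrix m n R} (hM : ∀ i j, 0 ≤ M i j) {v : n → R} (hv : 0 ≤ v) :
    0 ≤ M.mulVec v := fun i =>
  Finset.sum_nonneg fun j _ => mul_nonneg (hM i j) (hv j)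

/-- Lemma (L_uniq): for `β ∈ (0,1]` there is `Λ > 0` such that the equation
`Θ(λ) = D(0,1)^† − Γ_β λ^β ∫₀¹ D N(Θ(λ(1−y))) d(y^β)` has a unique continuous
nonnegative solution on `[0,Λ]`, and it satisfies `0 ≤ Θ(λ) ≤ D(0,1)^†`. -/
theorem L_uniq (β Γβ : ℝ) (hβ : β ∈ Set.Ioc (0:ℝ) 1) (hΓ : 0 < Γβ)
    (D : Matrix (Fin 2) (Fin 2) ℝ) (hD : ∀ i j, 0 < D i j)
    (b : Fin 2 → Fin 2 → Fin 2 → ℝ) (hb : ∀ i j k, 0 ≤ b i j k) :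
    ∃ Λ > (0:ℝ), ∃ Θ : ℝ → Fin 2 → ℝ,
      (∀ i, ContinuousOn (fun l => Θ l i) (Set.Icc 0 Λ)) ∧
      (∀ l ∈ Set.Icc (0:ℝ) Λ, ∀ i, 0 ≤ Θ l i ∧ Θ l i ≤ D.mulVec ![0, 1] i) ∧
      (∀ l ∈ Set.Icc (0:ℝ) Λ, ∀ i,
        Θ l i = D.mulVec ![0, 1] i -
          Γβ * l ^ β * ∫ y in (0:ℝ)..1,
            β * y ^ (β - 1) * (D.mulVec (quadMap b (Θ (l * (1 - y)))) i)) ∧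
      (∀ Θ' : ℝ → Fin 2 → ℝ,
        (∀ i, ContinuousOn (fun l => Θ' l i) (Set.Icc 0 Λ)) →
        (∀ l ∈ Set.Icc (0:ℝ) Λ, ∀ i, 0 ≤ Θ' l i) →
        (∀ l ∈ Set.Icc (0:ℝ) Λ, ∀ i,
          Θ' l i = D.mulVec ![0, 1] i -
            Γβ * l ^ β * ∫ y in (0:ℝ)..1,
              β * y ^ (β - 1) * (D.mulVec (quadMap b (Θ' (l * (1 - y)))) i)) →
        ∀ l ∈ Set.Icc (0:ℝ) Λ, ∀ i, Θ' l i = Θ l i) := by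
  obtain ⟨hβ0, -⟩ := hβ
  have hw : IntervalIntegrable (fun y : ℝ => β * y ^ (β - 1)) volume 0 1 :=
    (intervalIntegrable_rpow' (by linarith)).const_mul β
  have hF : ContDiff ℝ 1 fun x => D.mulVec (quadMap b x) :=
    (Matrix.mulVecLin D).toContinuousLinearMap.contDiff.comp (contDiff_quadMap b)
  have hc : ∀ i, 0 < D.mulVec ![0, 1] i := fun i => by
    simpa [Matrix.mulVec, dotProduct, Fin.sum_univ_two] using hD i 1
  exact exists_unique_volterra_solution hβ0 hΓ.le hw
    (fun y hy => mul_nonneg hβ0.le (Real.rpow_nonneg hy.1 _)) hF.locallyLipschitz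
    (fun x hx => Matrix.mulVec_nonneg (fun i j => (hD i j).le) (quadMap_nonneg hb hx)) hc
end

section
/- Let β ∈ (1/2, 1], let D and C_β be 2×2 matrices with positive entries, let N : ℝ² → ℝ² have components Nᵢ(x) = (1/2)Σ_{j,k} b^i_{jk} x_j x_k with nonnegative coefficients, and let Γ_β > 0. Then there exists Λ > 0 such that in the domain K = {(θ, λ) : 0 < θ ≤ Λ, 0 < λ ≤ 1} the system H(θ, λ) = C_β (1, λ θ^{1−β})^† − Γ_β θ^{2β−1} ∫₀¹ D N(H(θ(1−y), λ)) (1−y)^{2β−2} d(y^β) has a unique solution in the class of functions with nonnegative continuous components. -/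
/-!
Write the system as a fixed point `H = T H`. Since `β > 1/2`, the measure
`(1 - y)^(2β-2) d(y^β)` on `(0, 1)` has finite mass, so for `θ ≤ Λ` the integral term is
`O(Λ^(2β-1))` and `T` is a contraction in the sup norm once `Λ` is small. To apply Banach's fixed
point theorem to bounded continuous functions on `ℝ²`, the arguments `(θ, λ)` are clamped to
`[0, Λ] × [0, 1]` and `D N` is replaced by a bounded, globally Lipschitz `G` that agrees with it on
a box `[0, M]²`. For small `Λ` the integral term is smaller than `ε ≤ min_i (C_β)_{i0}`, so the
fixed point stays in the box and solves the original system with nonnegative components.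
Conversely, the integral term of a nonnegative solution is nonnegative, so the solution is bounded
by `C_β (1, λθ^(1-β))` and also lies in the box; the contraction estimate applied to the supremum of
the difference of two solutions then gives uniqueness.
-/

open Filter Set intervalIntegral

open MeasureTheory Topology
open scoped NNReal BoundedContinuousFunction

lemma integral_congr_of_eqOn_Ioo {E : Type*} [NormedAddCommGroup E] [NormedSpace ℝ E]
    {f g : ℝ → E} {a b : ℝ} (hab : a ≤ b) (h : EqOn f g (Ioo a b)) :
    ∫ x in a..b, f x = ∫ x in a..b, g x := by
  simp only [integral_of_le hab, integral_Ioc_eq_integral_Ioo]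
  exact setIntegral_congr_fun measurableSet_Ioo h

lemma integral_nonneg_of_forall_Ioo {f : ℝ → ℝ} {a b : ℝ} (hab : a ≤ b)
    (h : ∀ x ∈ Ioo a b, 0 ≤ f x) : 0 ≤ ∫ x in a..b, f x := by
  rw [integral_of_le hab, integral_Ioc_eq_integral_Ioo]
  exact setIntegral_nonneg measurableSet_Ioo h

lemma nonpos_of_forall_le_imp_le_mul {α : Type*} {s : Set α} {δ : α → ℝ} {q : ℝ} (hq : q < 1)
    (hδ : BddAbove (δ '' s)) (h : ∀ A, (∀ p ∈ s, δ p ≤ A) → ∀ p ∈ s, δ p ≤ q * A)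
    {p : α} (hp : p ∈ s) : δ p ≤ 0 := by
  have hA : ∀ x ∈ s, δ x ≤ sSup (δ '' s) := fun x hx => le_csSup hδ (mem_image_of_mem δ hx)
  have hAq : sSup (δ '' s) ≤ q * sSup (δ '' s) :=
    csSup_le ⟨δ p, mem_image_of_mem δ hp⟩ (forall_mem_image.2 (h _ hA))
  nlinarith [hA p hp]

lemma tendsto_mul_rpow_mul_nhdsGT_zero {r : ℝ} (hr : 0 < r) (a c : ℝ) :
    Tendsto (fun x : ℝ => a * x ^ r * c) (𝓝[>] 0) (𝓝 0) := by
  have : ContinuousAt (fun x : ℝ => a * x ^ r * c) 0 :=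
    (continuousAt_const.mul (Real.continuousAt_rpow_const 0 r (Or.inr hr.le))).mul
      continuousAt_const
  simpa [Real.zero_rpow hr.ne'] using this.tendsto.mono_left nhdsWithin_le_nhds

namespace FullShur

/-- The density of the measure `(1 - y) ^ (2β - 2) d(y ^ β)` on `(0, 1)`. -/
noncomputable def kernel (β y : ℝ) : ℝ := β * y ^ (β - 1) * (1 - y) ^ (2 * β - 2)

noncomputable def kernelMass (β : ℝ) : ℝ := ∫ y in (0:ℝ)..1, kernel β y

variable {β : ℝ}

lemma kernel_nonneg (hβ : 0 ≤ β) {y : ℝ} (hy : y ∈ Icc (0:ℝ) 1) : 0 ≤ kernel β y := by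
  have := hy.1
  have : 0 ≤ 1 - y := sub_nonneg.2 hy.2
  unfold kernel
  positivity

lemma measurable_kernel (β : ℝ) : Measurable (kernel β) := by
  unfold kernel
  fun_prop

lemma intervalIntegrable_kernel (hβ : 1 / 2 < β) : IntervalIntegrable (kernel β) volume 0 1 := by
  have hleft : ContinuousOn (fun y : ℝ => (1 - y) ^ (2 * β - 2)) (uIcc 0 (1 / 2)) :=
    (continuous_const.sub continuous_id).continuousOn.rpow_const fun y hy => by
      rw [uIcc_of_le (by norm_num)] at hy
      exact Or.inl (sub_pos.2 (by simp only [id]; linarith [hy.2])).ne'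
  have hright : ContinuousOn (fun y : ℝ => β * y ^ (β - 1)) (uIcc (1 / 2) 1) :=
    continuousOn_const.mul (continuousOn_id.rpow_const fun y hy => by
      rw [uIcc_of_le (by norm_num)] at hy
      exact Or.inl (by linarith [hy.1] : (0:ℝ) < y).ne')
  have hsing : IntervalIntegrable (fun y : ℝ => (1 - y) ^ (2 * β - 2)) volume (1 / 2) 1 := by
    have := (intervalIntegrable_rpow' (a := 0) (b := 1 / 2) (r := 2 * β - 2)
      (by linarith)).comp_sub_left 1
    rw [sub_zero, show (1:ℝ) - 1 / 2 = 1 / 2 by norm_num] at this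
    exact this.symm
  exact ((((intervalIntegrable_rpow' (by linarith)).const_mul β).mul_continuousOn hleft).trans
    (hsing.continuousOn_mul hright))

lemma kernelMass_nonneg (hβ : 0 ≤ β) : 0 ≤ kernelMass β :=
  integral_nonneg zero_le_one fun _ hy => kernel_nonneg hβ hy

section Operator

variable {E : Type*} [NormedAddCommGroup E] [NormedSpace ℝ E]

lemma norm_kernel_smul_le (hβ : 0 ≤ β) {y B : ℝ} (hy : y ∈ Icc (0:ℝ) 1) {x : E} (hx : ‖x‖ ≤ B) :
    ‖kernel β y • x‖ ≤ kernel β y * B := by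
  rw [norm_smul, Real.norm_of_nonneg (kernel_nonneg hβ hy)]
  exact mul_le_mul_of_nonneg_left hx (kernel_nonneg hβ hy)

lemma integrableOn_kernel_mul_const (hβ : 1 / 2 < β) (B : ℝ) :
    IntegrableOn (fun y => kernel β y * B) (Ioo 0 1) :=
  (intervalIntegrable_iff_integrableOn_Ioo_of_le zero_le_one).1
    ((intervalIntegrable_kernel hβ).mul_const B)

lemma intervalIntegrable_kernel_smul (hβ : 1 / 2 < β) {f : ℝ → E} {B : ℝ}
    (hf : ContinuousOn f (Ioo 0 1)) (hfB : ∀ y ∈ Ioo (0:ℝ) 1, ‖f y‖ ≤ B) :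
    IntervalIntegrable (fun y => kernel β y • f y) volume 0 1 := by
  rw [intervalIntegrable_iff_integrableOn_Ioo_of_le zero_le_one]
  refine (integrableOn_kernel_mul_const hβ B).mono'
    ((measurable_kernel β).aestronglyMeasurable.smul (hf.aestronglyMeasurable measurableSet_Ioo))
    ((ae_restrict_iff' measurableSet_Ioo).2 (.of_forall fun y hy => ?_))
  exact norm_kernel_smul_le (by linarith) (Ioo_subset_Icc_self hy) (hfB y hy)

lemma norm_integral_kernel_smul_le (hβ : 1 / 2 < β) {f : ℝ → E} {B : ℝ}
    (hfB : ∀ y ∈ Ioo (0:ℝ) 1, ‖f y‖ ≤ B) :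
    ‖∫ y in (0:ℝ)..1, kernel β y • f y‖ ≤ kernelMass β * B := by
  rw [kernelMass, ← intervalIntegral.integral_mul_const]
  simp only [integral_of_le zero_le_one, integral_Ioc_eq_integral_Ioo]
  refine norm_integral_le_of_norm_le (integrableOn_kernel_mul_const hβ B)
    ((ae_restrict_iff' measurableSet_Ioo).2 (.of_forall fun y hy => ?_))
  exact norm_kernel_smul_le (by linarith) (Ioo_subset_Icc_self hy) (hfB y hy)

noncomputable def rhsMap (β Γ : ℝ) (S : ℝ × ℝ → E) (G : E → E) (u : ℝ × ℝ → E) (p : ℝ × ℝ) : E :=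
  S p - (Γ * p.1 ^ (2 * β - 1)) • ∫ y in (0:ℝ)..1, kernel β y • G (u (p.1 * (1 - y), p.2))

variable {Γ Λ B : ℝ} {K : ℝ≥0} {S : ℝ × ℝ → E} {G : E → E}

lemma mul_rpow_mul_le_of_mem_Icc (hβ : 1 / 2 < β) (hΓ : 0 ≤ Γ) {θ c : ℝ} (hθ : θ ∈ Icc 0 Λ)
    (hc : 0 ≤ c) : Γ * θ ^ (2 * β - 1) * c ≤ Γ * Λ ^ (2 * β - 1) * c :=
  mul_le_mul_of_nonneg_right
    (mul_le_mul_of_nonneg_left (Real.rpow_le_rpow hθ.1 hθ.2 (by linarith)) hΓ) hc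

lemma continuous_rhsMap (hβ : 1 / 2 < β) (hS : Continuous S) (hG : Continuous G)
    (hGB : ∀ x, ‖G x‖ ≤ B) {u : ℝ × ℝ → E} (hu : Continuous u) :
    Continuous (rhsMap β Γ S G u) := by
  have hGu (y : ℝ) : Continuous fun p : ℝ × ℝ => G (u (p.1 * (1 - y), p.2)) :=
    hG.comp (hu.comp (by fun_prop))
  refine hS.sub ((continuous_const.mul
    ((Real.continuous_rpow_const (by linarith)).comp continuous_fst)).smul ?_)
  refine continuous_of_dominated_interval (bound := fun y => kernel β y * B)
    (fun p => (measurable_kernel β).aestronglyMeasurable.smul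
      (hG.comp (hu.comp (by fun_prop :
        Continuous fun y : ℝ => (p.1 * (1 - y), p.2)))).aestronglyMeasurable)
    (fun p => .of_forall fun y hy => ?_) ((intervalIntegrable_kernel hβ).mul_const B)
    (.of_forall fun y _ => continuous_const.smul (hGu y))
  rw [uIoc_of_le zero_le_one] at hy
  exact norm_kernel_smul_le (by linarith) (Ioc_subset_Icc_self hy) (hGB _)

lemma norm_rhsMap_sub_le (hβ : 1 / 2 < β) (hΓ : 0 ≤ Γ) (hGB : ∀ x, ‖G x‖ ≤ B)
    (u : ℝ × ℝ → E) {p : ℝ × ℝ} (hp : p.1 ∈ Icc 0 Λ) :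
    ‖rhsMap β Γ S G u p - S p‖ ≤ Γ * Λ ^ (2 * β - 1) * kernelMass β * B := by
  have hB : 0 ≤ B := (norm_nonneg _).trans (hGB 0)
  rw [rhsMap, sub_sub_cancel_left, norm_neg, norm_smul,
    Real.norm_of_nonneg (mul_nonneg hΓ (Real.rpow_nonneg hp.1 _)), mul_assoc _ _ B]
  calc _ ≤ Γ * p.1 ^ (2 * β - 1) * (kernelMass β * B) :=
        mul_le_mul_of_nonneg_left (norm_integral_kernel_smul_le hβ fun y _ => hGB _)
          (mul_nonneg hΓ (Real.rpow_nonneg hp.1 _))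
    _ ≤ _ := mul_rpow_mul_le_of_mem_Icc hβ hΓ hp
          (mul_nonneg (kernelMass_nonneg (by linarith)) hB)

lemma norm_rhsMap_sub_rhsMap_le (hβ : 1 / 2 < β) (hΓ : 0 ≤ Γ) (hG : LipschitzWith K G)
    (hGB : ∀ x, ‖G x‖ ≤ B) {u v : ℝ × ℝ → E} {p : ℝ × ℝ} (hp : p.1 ∈ Icc 0 Λ)
    (hu : ContinuousOn (fun y => u (p.1 * (1 - y), p.2)) (Ioo 0 1))
    (hv : ContinuousOn (fun y => v (p.1 * (1 - y), p.2)) (Ioo 0 1)) {d : ℝ}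
    (huv : ∀ y ∈ Ioo (0:ℝ) 1, ‖u (p.1 * (1 - y), p.2) - v (p.1 * (1 - y), p.2)‖ ≤ d) :
    ‖rhsMap β Γ S G u p - rhsMap β Γ S G v p‖ ≤ Γ * Λ ^ (2 * β - 1) * kernelMass β * K * d := by
  have hd : 0 ≤ d := (norm_nonneg _).trans (huv (1 / 2) ⟨by norm_num, by norm_num⟩)
  have hint {w : ℝ × ℝ → E} (hw : ContinuousOn (fun y => w (p.1 * (1 - y), p.2)) (Ioo 0 1)) :
      IntervalIntegrable (fun y => kernel β y • G (w (p.1 * (1 - y), p.2))) volume 0 1 :=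
    intervalIntegrable_kernel_smul hβ (hG.continuous.comp_continuousOn hw) fun y _ => hGB _
  rw [rhsMap, rhsMap, sub_sub_sub_cancel_left, ← smul_sub, ← integral_sub (hint hv) (hint hu),
    norm_smul, Real.norm_of_nonneg (mul_nonneg hΓ (Real.rpow_nonneg hp.1 _)), mul_assoc _ _ d,
    mul_assoc _ _ ((K : ℝ) * d)]
  simp_rw [← smul_sub]
  calc _ ≤ Γ * p.1 ^ (2 * β - 1) * (kernelMass β * (K * d)) := by
        refine mul_le_mul_of_nonneg_left (norm_integral_kernel_smul_le hβ fun y hy => ?_)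
          (mul_nonneg hΓ (Real.rpow_nonneg hp.1 _))
        rw [norm_sub_rev]
        exact (hG.norm_sub_le _ _).trans (mul_le_mul_of_nonneg_left (huv y hy) K.2)
    _ ≤ _ := mul_rpow_mul_le_of_mem_Icc hβ hΓ hp
          (mul_nonneg (kernelMass_nonneg (by linarith)) (mul_nonneg K.2 hd))

lemma mapsTo_mul_one_sub_Ioo {p : ℝ × ℝ} (hp : p ∈ Ioc 0 Λ ×ˢ Ioc (0:ℝ) 1) :
    MapsTo (fun y => (p.1 * (1 - y), p.2)) (Ioo 0 1) (Ioc 0 Λ ×ˢ Ioc 0 1) := fun y hy =>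
  ⟨⟨mul_pos hp.1.1 (sub_pos.2 hy.2), by nlinarith [hp.1.1, hp.1.2, hy.1]⟩, hp.2⟩

theorem exists_continuous_rhsMap_fixedPoint [CompleteSpace E] (hβ : 1 / 2 < β) (hΓ : 0 ≤ Γ)
    (hΛ : 0 ≤ Λ) (hS : Continuous S) (hG : LipschitzWith K G) (hGB : ∀ x, ‖G x‖ ≤ B)
    (hsmall : Γ * Λ ^ (2 * β - 1) * kernelMass β * K < 1) :
    ∃ u : ℝ × ℝ → E, Continuous u ∧ range u ⊆ rhsMap β Γ S G u '' (Icc 0 Λ ×ˢ Icc 0 1) ∧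
      EqOn u (rhsMap β Γ S G u) (Icc 0 Λ ×ˢ Icc 0 1) := by
  let c : ℝ × ℝ → ℝ × ℝ := fun p => (projIcc 0 Λ hΛ p.1, projIcc 0 1 zero_le_one p.2)
  have hc : Continuous c := by fun_prop
  have hc_mem : range c ⊆ Icc 0 Λ ×ˢ Icc 0 1 :=
    range_subset_iff.2 fun p => ⟨Subtype.prop _, Subtype.prop _⟩
  have hc_id : EqOn c id (Icc 0 Λ ×ˢ Icc 0 1) := fun p hp =>
    Prod.ext (congrArg Subtype.val (projIcc_of_mem hΛ hp.1))
      (congrArg Subtype.val (projIcc_of_mem zero_le_one hp.2))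
  have hrange (u : ℝ × ℝ → E) :
      range (rhsMap β Γ S G u ∘ c) ⊆ rhsMap β Γ S G u '' (Icc 0 Λ ×ˢ Icc 0 1) :=
    (range_comp _ _).trans_subset (image_mono hc_mem)
  -- clamping the arguments into the compact rectangle makes each image bounded
  let Φ : (ℝ × ℝ →ᵇ E) → (ℝ × ℝ →ᵇ E) := fun u =>
    ⟨⟨rhsMap β Γ S G u ∘ c, (continuous_rhsMap hβ hS hG.continuous hGB u.continuous).comp hc⟩,
      Metric.isBounded_range_iff.1 <| ((isCompact_Icc.prod isCompact_Icc).image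
        (continuous_rhsMap hβ hS hG.continuous hGB u.continuous)).isBounded.subset (hrange u)⟩
  have hq : 0 ≤ Γ * Λ ^ (2 * β - 1) * kernelMass β * K := by
    have := kernelMass_nonneg (by linarith : 0 ≤ β)
    positivity
  have hΦ : ContractingWith ⟨_, hq⟩ Φ := by
    refine ⟨hsmall, LipschitzWith.of_dist_le_mul fun u v => ?_⟩
    refine (BoundedContinuousFunction.dist_le (by positivity)).2 fun p => ?_
    rw [dist_eq_norm]
    exact norm_rhsMap_sub_rhsMap_le hβ hΓ hG hGB (hc_mem (mem_range_self p)).1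
      (u.continuous.comp (by fun_prop)).continuousOn (v.continuous.comp (by fun_prop)).continuousOn
      fun y _ => dist_eq_norm (u _) (v _) ▸ BoundedContinuousFunction.dist_coe_le_dist _
  set u := ContractingWith.fixedPoint Φ hΦ
  have hu : ⇑u = rhsMap β Γ S G u ∘ c := congrArg DFunLike.coe (hΦ.fixedPoint_isFixedPt).symm
  refine ⟨u, u.continuous, (congrArg range hu).trans_subset (hrange u), fun p hp => ?_⟩
  rw [congrFun hu p, Function.comp_apply, hc_id hp, id]

theorem eqOn_of_eqOn_rhsMap (hβ : 1 / 2 < β) (hΓ : 0 ≤ Γ) (hG : LipschitzWith K G)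
    (hGB : ∀ x, ‖G x‖ ≤ B) (hsmall : Γ * Λ ^ (2 * β - 1) * kernelMass β * K < 1)
    {u v : ℝ × ℝ → E} (hu : ContinuousOn u (Ioc 0 Λ ×ˢ Ioc 0 1))
    (hv : ContinuousOn v (Ioc 0 Λ ×ˢ Ioc 0 1))
    (hu_eq : EqOn u (rhsMap β Γ S G u) (Ioc 0 Λ ×ˢ Ioc 0 1))
    (hv_eq : EqOn v (rhsMap β Γ S G v) (Ioc 0 Λ ×ˢ Ioc 0 1)) :
    EqOn u v (Ioc 0 Λ ×ˢ Ioc 0 1) := by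
  have hθ {p : ℝ × ℝ} (hp : p ∈ Ioc 0 Λ ×ˢ Ioc (0:ℝ) 1) : p.1 ∈ Icc 0 Λ := Ioc_subset_Icc_self hp.1
  have hbdd : BddAbove ((fun p => ‖u p - v p‖) '' (Ioc 0 Λ ×ˢ Ioc 0 1)) := by
    refine ⟨2 * (Γ * Λ ^ (2 * β - 1) * kernelMass β * B), forall_mem_image.2 fun p hp => ?_⟩
    have hu' := norm_rhsMap_sub_le (S := S) hβ hΓ hGB u (hθ hp)
    have hv' := norm_rhsMap_sub_le (S := S) hβ hΓ hGB v (hθ hp)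
    rw [← hu_eq hp] at hu'
    rw [← hv_eq hp, norm_sub_rev] at hv'
    linarith [norm_sub_le_norm_sub_add_norm_sub (u p) (S p) (v p)]
  intro p hp
  refine sub_eq_zero.1 (norm_le_zero_iff.1 (nonpos_of_forall_le_imp_le_mul hsmall hbdd
    (fun A hA q hq => ?_) hp))
  rw [hu_eq hq, hv_eq hq]
  have hseg := mapsTo_mul_one_sub_Ioo hq
  exact norm_rhsMap_sub_rhsMap_le hβ hΓ hG hGB (hθ hq) (hu.comp (by fun_prop) hseg)
    (hv.comp (by fun_prop) hseg) fun y hy => hA _ (hseg hy)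

end Operator

section Box

variable {ι : Type*} [Fintype ι]

lemma mem_Icc_of_norm_sub_le {x y : ι → ℝ} {ε M : ℝ} (hx : ∀ i, x i ∈ Icc ε (M - ε))
    (hxy : ‖y - x‖ ≤ ε) : y ∈ Icc 0 fun _ => M := by
  have h i : |y i - x i| ≤ ε := (norm_le_pi_norm (y - x) i).trans hxy
  exact ⟨fun i => show 0 ≤ y i by linarith [(abs_le.1 (h i)).1, (hx i).1],
    fun i => show y i ≤ M by linarith [(abs_le.1 (h i)).2, (hx i).2]⟩

theorem exists_lipschitzWith_bounded_eqOn_Icc {E : Type*} [NormedAddCommGroup E]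
    [NormedSpace ℝ E] {F : (ι → ℝ) → E} (hF : ContDiff ℝ 1 F) {M : ℝ} (hM : 0 ≤ M) :
    ∃ G : (ι → ℝ) → E, ∃ K : ℝ≥0, ∃ B, LipschitzWith K G ∧ (∀ x, ‖G x‖ ≤ B) ∧
      EqOn G F (Icc 0 fun _ => M) := by
  let proj : (ι → ℝ) → ι → ℝ := fun x i => projIcc 0 M hM (x i)
  have hproj : LipschitzWith 1 proj := LipschitzWith.of_dist_le_mul fun x y =>
    (dist_pi_le_iff (by positivity)).2 fun i =>
      ((LipschitzWith.projIcc hM).dist_le_mul _ _).trans (by simpa using dist_le_pi_dist x y i)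
  have hproj_mem x : proj x ∈ Icc 0 fun _ => M :=
    ⟨fun i => (projIcc 0 M hM (x i)).2.1, fun i => (projIcc 0 M hM (x i)).2.2⟩
  have hbox : IsCompact (Icc 0 fun _ : ι => M) := isCompact_Icc
  obtain ⟨K, hK⟩ := hF.contDiffOn.exists_lipschitzOnWith one_ne_zero (convex_Icc _ _) hbox
  obtain ⟨B, hB⟩ := hbox.exists_bound_of_continuousOn hF.continuous.continuousOn
  refine ⟨F ∘ proj, K * 1, B, lipschitzOnWith_univ.1 (hK.comp hproj.lipschitzOnWith
    fun x _ => hproj_mem x), fun x => hB _ (hproj_mem x), fun x hx => ?_⟩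
  exact congrArg F (funext fun i => congrArg Subtype.val (projIcc_of_mem hM ⟨hx.1 i, hx.2 i⟩))

end Box

section Solutions

variable {ι : Type*} {Γ Λ : ℝ} {S : ℝ × ℝ → ι → ℝ}

/-- The system, componentwise. Unlike `EqOn H (rhsMap β Γ S F H)`, this does not presuppose that
the integrands are integrable. -/
def SolvesOn (β Γ Λ : ℝ) (S : ℝ × ℝ → ι → ℝ) (F : (ι → ℝ) → ι → ℝ) (H : ℝ × ℝ → ι → ℝ) :
    Prop :=
  ∀ p ∈ Ioc 0 Λ ×ˢ Ioc (0:ℝ) 1, ∀ i, H p i = S p i - Γ * p.1 ^ (2 * β - 1) *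
    ∫ y in (0:ℝ)..1, kernel β y * F (H (p.1 * (1 - y), p.2)) i

lemma rhsMap_apply [Fintype ι] {G : (ι → ℝ) → ι → ℝ} {u : ℝ × ℝ → ι → ℝ} {p : ℝ × ℝ}
    (hint : IntervalIntegrable (fun y => kernel β y • G (u (p.1 * (1 - y), p.2))) volume 0 1)
    (i : ι) :
    rhsMap β Γ S G u p i = S p i - Γ * p.1 ^ (2 * β - 1) *
      ∫ y in (0:ℝ)..1, kernel β y * G (u (p.1 * (1 - y), p.2)) i := by
  rw [rhsMap, Pi.sub_apply, Pi.smul_apply, smul_eq_mul]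
  congr 2
  exact ((ContinuousLinearMap.proj (R := ℝ) (φ := fun _ : ι => ℝ) i).intervalIntegral_comp_comm
    hint).symm

lemma solvesOn_iff_eqOn_rhsMap [Fintype ι] {F G : (ι → ℝ) → ι → ℝ} {M B : ℝ} (hβ : 1 / 2 < β)
    (hG : Continuous G) (hGB : ∀ x, ‖G x‖ ≤ B) (hGF : EqOn G F (Icc 0 fun _ => M))
    {H : ℝ × ℝ → ι → ℝ} (hH : ContinuousOn H (Ioc 0 Λ ×ˢ Ioc 0 1))
    (hH_mem : ∀ p ∈ Ioc 0 Λ ×ˢ Ioc 0 1, H p ∈ Icc 0 fun _ => M) :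
    SolvesOn β Γ Λ S F H ↔ EqOn H (rhsMap β Γ S G H) (Ioc 0 Λ ×ˢ Ioc 0 1) := by
  have key : ∀ p ∈ Ioc 0 Λ ×ˢ Ioc (0:ℝ) 1, ∀ i, rhsMap β Γ S G H p i = S p i -
      Γ * p.1 ^ (2 * β - 1) * ∫ y in (0:ℝ)..1, kernel β y * F (H (p.1 * (1 - y), p.2)) i := by
    intro p hp i
    have hseg := mapsTo_mul_one_sub_Ioo hp
    rw [rhsMap_apply (intervalIntegrable_kernel_smul hβ
      (hG.comp_continuousOn (hH.comp (by fun_prop) hseg)) fun y _ => hGB _)]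
    congr 2
    exact integral_congr_of_eqOn_Ioo zero_le_one fun y hy => by
      rw [hGF (hH_mem _ (hseg hy))]
  exact ⟨fun h p hp => funext fun i => (h p hp i).trans (key p hp i).symm,
    fun h p hp i => (congrFun (h hp) i).trans (key p hp i)⟩

lemma SolvesOn.mem_Icc {F : (ι → ℝ) → ι → ℝ} {H : ℝ × ℝ → ι → ℝ} {M : ℝ}
    (hsol : SolvesOn β Γ Λ S F H) (hβ : 0 ≤ β) (hΓ : 0 ≤ Γ) (hF : ∀ x, 0 ≤ x → 0 ≤ F x)
    (hH : ∀ p ∈ Ioc 0 Λ ×ˢ Ioc 0 1, 0 ≤ H p) (hS : ∀ p ∈ Ioc 0 Λ ×ˢ Ioc 0 1, ∀ i, S p i ≤ M)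
    {p : ℝ × ℝ} (hp : p ∈ Ioc 0 Λ ×ˢ Ioc 0 1) : H p ∈ Icc 0 fun _ => M := by
  refine ⟨hH p hp, fun i => ?_⟩
  have hI : 0 ≤ ∫ y in (0:ℝ)..1, kernel β y * F (H (p.1 * (1 - y), p.2)) i :=
    integral_nonneg_of_forall_Ioo zero_le_one fun y hy =>
      mul_nonneg (kernel_nonneg hβ (Ioo_subset_Icc_self hy))
        (hF _ (hH _ (mapsTo_mul_one_sub_Ioo hp hy)) i)
  have hΓθ : 0 ≤ Γ * p.1 ^ (2 * β - 1) := mul_nonneg hΓ (Real.rpow_nonneg hp.1.1.le _)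
  rw [hsol p hp i]
  nlinarith [hS p hp i, mul_nonneg hΓθ hI]

end Solutions

theorem exists_unique_nonneg_solution {ι : Type*} [Fintype ι] [Nonempty ι] {Γ : ℝ}
    {S : ℝ × ℝ → ι → ℝ} {F : (ι → ℝ) → ι → ℝ} {ε M : ℝ} (hβ : 1 / 2 < β) (hΓ : 0 ≤ Γ)
    (hS : Continuous S) (hε : 0 < ε)
    (hS_mem : ∀ p ∈ Icc (0:ℝ) 1 ×ˢ Icc (0:ℝ) 1, ∀ i, S p i ∈ Icc ε (M - ε))
    (hF : ContDiff ℝ 1 F) (hF0 : ∀ x, 0 ≤ x → 0 ≤ F x) :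
    ∃ Λ > 0, ∃ H : ℝ × ℝ → ι → ℝ, Continuous H ∧ (∀ p ∈ Ioc 0 Λ ×ˢ Ioc 0 1, 0 ≤ H p) ∧
      SolvesOn β Γ Λ S F H ∧
      ∀ H' : ℝ × ℝ → ι → ℝ, ContinuousOn H' (Ioc 0 Λ ×ˢ Ioc 0 1) →
        (∀ p ∈ Ioc 0 Λ ×ˢ Ioc 0 1, 0 ≤ H' p) → SolvesOn β Γ Λ S F H' →
        EqOn H' H (Ioc 0 Λ ×ˢ Ioc 0 1) := by
  have hM : 0 ≤ M := by
    have := hS_mem (0, 0) ⟨left_mem_Icc.2 zero_le_one, left_mem_Icc.2 zero_le_one⟩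
      (Classical.arbitrary ι)
    linarith [this.1, this.2]
  obtain ⟨G, K, B, hGK, hGB, hGF⟩ := exists_lipschitzWith_bounded_eqOn_Icc hF hM
  have hsmall := tendsto_mul_rpow_mul_nhdsGT_zero (by linarith : 0 < 2 * β - 1) Γ (kernelMass β)
  obtain ⟨Λ, ⟨hcontr, hdev⟩, hΛ0, hΛ1⟩ :=
    ((((hsmall.mul_const (K : ℝ)).eventually (eventually_lt_nhds (b := 1) (by simp))).and
      ((hsmall.mul_const B).eventually (eventually_lt_nhds (b := ε) (by simpa using hε)))).and
      (Ioc_mem_nhdsGT one_pos)).exists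
  have hK_sub : Ioc 0 Λ ×ˢ Ioc (0:ℝ) 1 ⊆ Icc 0 Λ ×ˢ Icc 0 1 :=
    prod_mono Ioc_subset_Icc_self Ioc_subset_Icc_self
  have hΛ_sub : Icc 0 Λ ×ˢ Icc (0:ℝ) 1 ⊆ Icc 0 1 ×ˢ Icc 0 1 :=
    prod_mono (Icc_subset_Icc_right hΛ1) le_rfl
  obtain ⟨u, hu, hu_range, hu_eq⟩ :=
    exists_continuous_rhsMap_fixedPoint hβ hΓ hΛ0.le hS hGK hGB hcontr
  -- the perturbation of `S` is smaller than `ε`, which keeps `u` inside the box where `G = F`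
  have hu_mem p : u p ∈ Icc 0 fun _ => M := by
    obtain ⟨q, hq, hqp⟩ := hu_range (mem_range_self p)
    rw [← hqp]
    exact mem_Icc_of_norm_sub_le (hS_mem q (hΛ_sub hq))
      ((norm_rhsMap_sub_le hβ hΓ hGB u hq.1).trans hdev.le)
  have hsolves {H : ℝ × ℝ → ι → ℝ} :=
    solvesOn_iff_eqOn_rhsMap (S := S) (Γ := Γ) (Λ := Λ) (H := H) hβ hGK.continuous hGB hGF
  refine ⟨Λ, hΛ0, u, hu, fun p _ => (hu_mem p).1,
    (hsolves hu.continuousOn fun p _ => hu_mem p).2 (hu_eq.mono hK_sub),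
    fun H' hH' hH'0 hH'sol => ?_⟩
  have hH'_mem p (hp : p ∈ Ioc 0 Λ ×ˢ Ioc 0 1) : H' p ∈ Icc 0 fun _ => M :=
    hH'sol.mem_Icc (by linarith) hΓ hF0 hH'0
      (fun q hq i => by linarith [(hS_mem q (hΛ_sub (hK_sub hq)) i).2]) hp
  exact eqOn_of_eqOn_rhsMap hβ hΓ hGK hGB hcontr hH' hu.continuousOn
    ((hsolves hH' hH'_mem).1 hH'sol) (hu_eq.mono hK_sub)

end FullShur

lemma contDiff_mulVec_quadMap (D : Matrix (Fin 2) (Fin 2) ℝ) (b : Fin 2 → Fin 2 → Fin 2 → ℝ)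
    {n : WithTop ℕ∞} : ContDiff ℝ n fun x => D.mulVec (quadMap b x) := by
  have : ContDiff ℝ n (quadMap b) := by
    unfold quadMap
    fun_prop
  exact (LinearMap.toContinuousLinearMap (Matrix.mulVecLin D)).contDiff.comp this

lemma mulVec_quadMap_nonneg {D : Matrix (Fin 2) (Fin 2) ℝ} {b : Fin 2 → Fin 2 → Fin 2 → ℝ}
    (hD : ∀ i j, 0 ≤ D i j) (hb : ∀ i j k, 0 ≤ b i j k) {x : Fin 2 → ℝ} (hx : 0 ≤ x) :
    0 ≤ D.mulVec (quadMap b x) := by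
  have hq : 0 ≤ quadMap b x := fun i => mul_nonneg (by norm_num) (Finset.sum_nonneg fun j _ =>
    Finset.sum_nonneg fun k _ => mul_nonneg (mul_nonneg (hb i j k) (hx j)) (hx k))
  exact fun i => show 0 ≤ ∑ j, D i j * quadMap b x j from
    Finset.sum_nonneg fun j _ => mul_nonneg (hD i j) (hq j)

lemma exists_mulVec_mem_Icc {C : Matrix (Fin 2) (Fin 2) ℝ} (hC0 : ∀ i, 0 < C i 0)
    (hC1 : ∀ i, 0 ≤ C i 1) :
    ∃ ε > 0, ∃ M, ∀ t ∈ Icc (0:ℝ) 1, ∀ i, C.mulVec ![1, t] i ∈ Icc ε (M - ε) := by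
  refine ⟨min (C 0 0) (C 1 0), lt_min (hC0 0) (hC0 1),
    max (C 0 0 + C 0 1) (C 1 0 + C 1 1) + min (C 0 0) (C 1 0), fun t ht i => ?_⟩
  have hCt : C.mulVec ![1, t] i = C i 0 + C i 1 * t := by
    simp [Matrix.mulVec, dotProduct, Fin.sum_univ_two]
  have hε : min (C 0 0) (C 1 0) ≤ C i 0 := by fin_cases i <;> simp
  have hM : C i 0 + C i 1 ≤ max (C 0 0 + C 0 1) (C 1 0 + C 1 1) := by fin_cases i <;> simp
  rw [hCt, add_sub_cancel_right]
  exact ⟨by nlinarith [hC1 i, ht.1], by nlinarith [hC1 i, ht.2]⟩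

/-- Lemma (L_fullShur): for `β ∈ (1/2,1]` there is `Λ > 0` such that in
`K = {(θ,λ) : 0 < θ ≤ Λ, 0 < λ ≤ 1}` the system
`H(θ,λ) = C_β(1, λθ^{1−β})^† − Γ_β θ^{2β−1} ∫₀¹ D N(H(θ(1−y),λ)) (1−y)^{2β−2} d(y^β)`
has a unique solution with nonnegative continuous components. -/
theorem L_fullShur (β Γβ : ℝ) (hβ : β ∈ Set.Ioc (1/2 : ℝ) 1) (hΓ : 0 < Γβ)
    (D Cβ : Matrix (Fin 2) (Fin 2) ℝ) (hD : ∀ i j, 0 < D i j) (hC : ∀ i j, 0 < Cβ i j)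
    (b : Fin 2 → Fin 2 → Fin 2 → ℝ) (hb : ∀ i j k, 0 ≤ b i j k) :
    ∃ Λ > (0:ℝ), ∃ H : ℝ → ℝ → Fin 2 → ℝ,
      (∀ i, ContinuousOn (fun p : ℝ × ℝ => H p.1 p.2 i)
        (Set.Ioc (0:ℝ) Λ ×ˢ Set.Ioc (0:ℝ) 1)) ∧
      (∀ θ ∈ Set.Ioc (0:ℝ) Λ, ∀ l ∈ Set.Ioc (0:ℝ) 1, ∀ i, 0 ≤ H θ l i) ∧
      (∀ θ ∈ Set.Ioc (0:ℝ) Λ, ∀ l ∈ Set.Ioc (0:ℝ) 1, ∀ i,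
        H θ l i = Cβ.mulVec ![1, l * θ ^ (1 - β)] i -
          Γβ * θ ^ (2 * β - 1) * ∫ y in (0:ℝ)..1,
            β * y ^ (β - 1) * (1 - y) ^ (2 * β - 2) *
              (D.mulVec (quadMap b (H (θ * (1 - y)) l)) i)) ∧
      (∀ H' : ℝ → ℝ → Fin 2 → ℝ,
        (∀ i, ContinuousOn (fun p : ℝ × ℝ => H' p.1 p.2 i)
          (Set.Ioc (0:ℝ) Λ ×ˢ Set.Ioc (0:ℝ) 1)) →
        (∀ θ ∈ Set.Ioc (0:ℝ) Λ, ∀ l ∈ Set.Ioc (0:ℝ) 1, ∀ i, 0 ≤ H' θ l i) →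
        (∀ θ ∈ Set.Ioc (0:ℝ) Λ, ∀ l ∈ Set.Ioc (0:ℝ) 1, ∀ i,
          H' θ l i = Cβ.mulVec ![1, l * θ ^ (1 - β)] i -
            Γβ * θ ^ (2 * β - 1) * ∫ y in (0:ℝ)..1,
              β * y ^ (β - 1) * (1 - y) ^ (2 * β - 2) *
                (D.mulVec (quadMap b (H' (θ * (1 - y)) l)) i)) →
        ∀ θ ∈ Set.Ioc (0:ℝ) Λ, ∀ l ∈ Set.Ioc (0:ℝ) 1, ∀ i, H' θ l i = H θ l i) := by
  obtain ⟨hβ, hβ1⟩ := hβ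
  obtain ⟨ε, hε, M, hCM⟩ := exists_mulVec_mem_Icc (fun i => hC i 0) (fun i => (hC i 1).le)
  have hS_mem : ∀ p ∈ Icc (0:ℝ) 1 ×ˢ Icc (0:ℝ) 1, ∀ i,
      Cβ.mulVec ![1, p.2 * p.1 ^ (1 - β)] i ∈ Icc ε (M - ε) := fun p hp =>
    hCM _ ⟨mul_nonneg hp.2.1 (Real.rpow_nonneg hp.1.1 _), mul_le_one₀ hp.2.2
      (Real.rpow_nonneg hp.1.1 _) (Real.rpow_le_one hp.1.1 hp.1.2 (by linarith))⟩
  obtain ⟨Λ, hΛ, H, hH, hH0, hHsol, huniq⟩ :=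
    FullShur.exists_unique_nonneg_solution (S := fun p => Cβ.mulVec ![1, p.2 * p.1 ^ (1 - β)])
      (F := fun x => D.mulVec (quadMap b x)) hβ hΓ.le
      (by fun_prop (disch := linarith)) hε hS_mem (contDiff_mulVec_quadMap D b)
      fun x hx => mulVec_quadMap_nonneg (fun i j => (hD i j).le) hb hx
  refine ⟨Λ, hΛ, fun θ l => H (θ, l), fun i => ?_, fun θ hθ l hl => hH0 (θ, l) ⟨hθ, hl⟩,
    fun θ hθ l hl => hHsol (θ, l) ⟨hθ, hl⟩, fun H' hH' hH'0 hH'sol θ hθ l hl => ?_⟩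
  · exact ((continuous_apply i).comp hH).continuousOn
  · exact congrFun (huniq (fun p => H' p.1 p.2) (continuousOn_pi.2 hH')
      (fun p hp => hH'0 p.1 hp.1 p.2 hp.2) (fun p hp => hH'sol p.1 hp.1 p.2 hp.2)
      (show (θ, l) ∈ Ioc 0 Λ ×ˢ Ioc 0 1 from ⟨hθ, hl⟩))
end

section
/- Let U_I : [0,∞) → M₂(ℝ) be a matrix-valued nondecreasing function, R : (0,∞) → (0,∞) regularly varying at infinity with index β ∈ (0,1], D ∈ M₂(ℝ), and Γ_β > 0, such that lim_{t→∞} U_I(ty)/R(t) = Γ_β D y^β for every y > 0. Let μ̂₂ : [0,∞) → [1,∞) be regularly varying with index 1−β and nondecreasing. Then for any fixed ε ∈ (0,1), lim_{t→∞} (μ̂₂²(t)/R(t)) ∫₀^{1−ε} (1/μ̂₂²(t(1−y))) dU_I(ty) = β Γ_β D ∫₀^{1−ε} (1−y)^{2β−2} y^{β−1} dy. -/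
/-!
Substituting `w = t y`, the quantity is `∫_{[0, 1-ε]} g_t dF_t` with
`g_t y = (μ̂₂ t / μ̂₂ (t (1 - y)))²`, nondecreasing in `y`, and `F_t y = U (t y) / R t`.
For a monotone integrand the integral is squeezed between the lower and upper Riemann–Stieltjes
sums of a partition, plus the atom `F_t 0` at the origin. As `t → ∞` these sums converge to the
sums for `g y = (1 - y)^(2β-2)` and `F y = Γ_β D y^β`, the atom tends to `0`, and the limit sums
squeeze `βΓ_β D ∫ g y y^(β-1) dy`. For the partition of `[0, b]`, `b = 1 - ε`, into `n` equal
pieces the upper and lower limit sums differ by at most `Γ_β D (b / n)^β (g b - g 0)`, by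
subadditivity of `y ↦ y^β`.
-/

open Filter Set MeasureTheory intervalIntegral
open scoped Topology

/-- `ξ k` is the tag of the piece `[x k, x (k+1)]`: for monotone `g`, `ξ = x` gives the lower
and `ξ = x ∘ succ` the upper Riemann–Stieltjes sum. -/
def stieltjesSum (g F : ℝ → ℝ) (x ξ : ℕ → ℝ) (n : ℕ) : ℝ :=
  ∑ k ∈ Finset.range n, g (ξ k) * (F (x (k + 1)) - F (x k))

theorem Monotone.Icc_subset_Icc_succ {x : ℕ → ℝ} (hx : Monotone x) {n k : ℕ} (hk : k < n) :
    Icc (x k) (x (k + 1)) ⊆ Icc (x 0) (x n) :=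
  Icc_subset_Icc (hx (Nat.zero_le k)) (hx hk)

theorem stieltjesSum_le_intervalIntegral {μ : Measure ℝ} {h w W : ℝ → ℝ} {x ξ : ℕ → ℝ} {n : ℕ}
    (hx : Monotone x) (hw : ∀ u ∈ Icc (x 0) (x n), 0 ≤ w u)
    (hwi : IntervalIntegrable w μ (x 0) (x n))
    (hhwi : IntervalIntegrable (fun u => h u * w u) μ (x 0) (x n))
    (hW : ∀ k < n, ∫ u in x k..x (k + 1), w u ∂μ = W (x (k + 1)) - W (x k))
    (hξ : ∀ k < n, ∀ u ∈ Icc (x k) (x (k + 1)), h (ξ k) ≤ h u) :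
    stieltjesSum h W x ξ n ≤ ∫ u in x 0..x n, h u * w u ∂μ := by
  have hsub : ∀ k < n, uIcc (x k) (x (k + 1)) ⊆ uIcc (x 0) (x n) := fun k hk => by
    rw [uIcc_of_le (hx k.le_succ), uIcc_of_le (hx (Nat.zero_le n))]
    exact hx.Icc_subset_Icc_succ hk
  rw [← sum_integral_adjacent_intervals fun k hk => hhwi.mono_set (hsub k hk)]
  refine Finset.sum_le_sum fun k hk => ?_
  rw [Finset.mem_range] at hk
  rw [← hW k hk, ← intervalIntegral.integral_const_mul]
  refine integral_mono_on (hx k.le_succ) ((hwi.mono_set (hsub k hk)).const_mul _)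
    (hhwi.mono_set (hsub k hk)) fun u hu =>
      mul_le_mul_of_nonneg_right (hξ k hk u hu) (hw u (hx.Icc_subset_Icc_succ hk hu))

theorem intervalIntegral_le_stieltjesSum {μ : Measure ℝ} {h w W : ℝ → ℝ} {x ξ : ℕ → ℝ} {n : ℕ}
    (hx : Monotone x) (hw : ∀ u ∈ Icc (x 0) (x n), 0 ≤ w u)
    (hwi : IntervalIntegrable w μ (x 0) (x n))
    (hhwi : IntervalIntegrable (fun u => h u * w u) μ (x 0) (x n))
    (hW : ∀ k < n, ∫ u in x k..x (k + 1), w u ∂μ = W (x (k + 1)) - W (x k))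
    (hξ : ∀ k < n, ∀ u ∈ Icc (x k) (x (k + 1)), h u ≤ h (ξ k)) :
    ∫ u in x 0..x n, h u * w u ∂μ ≤ stieltjesSum h W x ξ n := by
  have := stieltjesSum_le_intervalIntegral (h := fun u => -h u) hx hw hwi
    (by simpa only [neg_mul, Pi.neg_def] using hhwi.neg) hW
    fun k hk u hu => neg_le_neg (hξ k hk u hu)
  simpa only [stieltjesSum, neg_mul, Finset.sum_neg_distrib, intervalIntegral.integral_neg,
    neg_le_neg_iff] using this

theorem stieltjesSum_succ_sub_le {g F : ℝ → ℝ} {x : ℕ → ℝ} {n : ℕ} {C : ℝ}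
    (hg : ∀ k < n, g (x k) ≤ g (x (k + 1)))
    (hF : ∀ k < n, 0 ≤ F (x (k + 1)) - F (x k) ∧ F (x (k + 1)) - F (x k) ≤ C) :
    stieltjesSum g F x (fun k => x (k + 1)) n - stieltjesSum g F x x n ≤
      C * (g (x n) - g (x 0)) := by
  rw [stieltjesSum, stieltjesSum, ← Finset.sum_sub_distrib,
    ← Finset.sum_range_sub (fun k => g (x k)), Finset.mul_sum]
  refine Finset.sum_le_sum fun k hk => ?_
  rw [Finset.mem_range] at hk
  rw [← sub_mul, mul_comm]
  exact mul_le_mul_of_nonneg_right (hF k hk).2 (sub_nonneg.2 (hg k hk))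

theorem tendsto_stieltjesSum {α : Type*} {l : Filter α} {g F : α → ℝ → ℝ} {g₀ F₀ : ℝ → ℝ}
    {x ξ : ℕ → ℝ} {n : ℕ} (hg : ∀ k < n, Tendsto (fun t => g t (ξ k)) l (𝓝 (g₀ (ξ k))))
    (hF : ∀ k ≤ n, Tendsto (fun t => F t (x k)) l (𝓝 (F₀ (x k)))) :
    Tendsto (fun t => stieltjesSum (g t) (F t) x ξ n) l (𝓝 (stieltjesSum g₀ F₀ x ξ n)) :=
  tendsto_finsetSum _ fun k hk => (hg k (Finset.mem_range.1 hk)).mul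
    ((hF _ (Finset.mem_range.1 hk)).sub (hF k (Finset.mem_range.1 hk).le))

theorem tendsto_of_forall_sandwich {α : Type*} {l : Filter α} {I : α → ℝ} {L : ℝ}
    (h : ∀ δ > 0, ∃ (lo hi : α → ℝ) (a b : ℝ), Tendsto lo l (𝓝 a) ∧ Tendsto hi l (𝓝 b) ∧
      a ≤ L ∧ L ≤ b ∧ b - a < δ ∧ ∀ᶠ t in l, lo t ≤ I t ∧ I t ≤ hi t) :
    Tendsto I l (𝓝 L) := by
  refine tendsto_order.2 ⟨fun L' hL' => ?_, fun L' hL' => ?_⟩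
  · obtain ⟨lo, _, a, b, hlo, -, -, hLb, hab, hI⟩ := h (L - L') (sub_pos.2 hL')
    filter_upwards [hlo.eventually (lt_mem_nhds (by linarith : L' < a)), hI] with t h1 h2
    exact h1.trans_le h2.1
  · obtain ⟨_, hi, a, b, -, hhi, haL, -, hab, hI⟩ := h (L' - L) (sub_pos.2 hL')
    filter_upwards [hhi.eventually (gt_mem_nhds (by linarith : b < L')), hI] with t h1 h2
    exact h2.2.trans_lt h1

namespace StieltjesFunction

theorem intervalIntegral_one (f : StieltjesFunction ℝ) {a b : ℝ} (hab : a ≤ b) :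
    ∫ _ in a..b, (1 : ℝ) ∂f.measure = f b - f a := by
  rw [integral_const', Ioc_eq_empty (not_lt.2 hab), measureReal_empty, measureReal_def,
    f.measure_Ioc, ENNReal.toReal_ofReal (sub_nonneg.2 (f.mono hab)), sub_zero, smul_eq_mul,
    mul_one]

theorem setIntegral_Icc (f : StieltjesFunction ℝ) {h : ℝ → ℝ} {a b : ℝ} (hab : a ≤ b)
    (hh : IntegrableOn h (Icc a b) f.measure) :
    ∫ w in Icc a b, h w ∂f.measure =
      h a * (f a - Function.leftLim f a) + ∫ w in a..b, h w ∂f.measure := by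
  rw [← Icc_union_Ioc_eq_Icc le_rfl hab, setIntegral_union (by simp) measurableSet_Ioc
    (hh.mono_set (Icc_subset_Icc_right hab)) (hh.mono_set Ioc_subset_Icc_self), Icc_self,
    integral_singleton, measureReal_def, f.measure_singleton,
    ENNReal.toReal_ofReal (sub_nonneg.2 (f.mono.leftLim_le le_rfl)), integral_of_le hab,
    smul_eq_mul, mul_comm]

theorem stieltjesSum_le_setIntegral_Icc (f : StieltjesFunction ℝ) {h : ℝ → ℝ} {x ξ : ℕ → ℝ}
    {n : ℕ} (hx : Monotone x) (hh : IntegrableOn h (Icc (x 0) (x n)) f.measure)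
    (hξ : ∀ k < n, ∀ u ∈ Icc (x k) (x (k + 1)), h (ξ k) ≤ h u) :
    h (x 0) * (f (x 0) - Function.leftLim f (x 0)) + stieltjesSum h f x ξ n ≤
      ∫ w in Icc (x 0) (x n), h w ∂f.measure := by
  have hx0n := hx (Nat.zero_le n)
  rw [f.setIntegral_Icc hx0n hh]
  have := stieltjesSum_le_intervalIntegral (μ := f.measure) (w := fun _ => 1) hx
    (fun _ _ => zero_le_one) intervalIntegrable_const
    (by simpa only [mul_one, intervalIntegrable_iff_integrableOn_Ioc_of_le hx0n]
      using hh.mono_set Ioc_subset_Icc_self)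
    (fun k _ => f.intervalIntegral_one (hx k.le_succ)) hξ
  simp only [mul_one] at this
  linarith

theorem setIntegral_Icc_le_stieltjesSum (f : StieltjesFunction ℝ) {h : ℝ → ℝ} {x ξ : ℕ → ℝ}
    {n : ℕ} (hx : Monotone x) (hh : IntegrableOn h (Icc (x 0) (x n)) f.measure)
    (hξ : ∀ k < n, ∀ u ∈ Icc (x k) (x (k + 1)), h u ≤ h (ξ k)) :
    ∫ w in Icc (x 0) (x n), h w ∂f.measure ≤
      h (x 0) * (f (x 0) - Function.leftLim f (x 0)) + stieltjesSum h f x ξ n := by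
  have hx0n := hx (Nat.zero_le n)
  rw [f.setIntegral_Icc hx0n hh]
  have := intervalIntegral_le_stieltjesSum (μ := f.measure) (w := fun _ => 1) hx
    (fun _ _ => zero_le_one) intervalIntegrable_const
    (by simpa only [mul_one, intervalIntegrable_iff_integrableOn_Ioc_of_le hx0n]
      using hh.mono_set Ioc_subset_Icc_self)
    (fun k _ => f.intervalIntegral_one (hx k.le_succ)) hξ
  simp only [mul_one] at this
  linarith

end StieltjesFunction

theorem stieltjesSum_rpow_le_integral {g : ℝ → ℝ} {y : ℕ → ℝ} {n : ℕ} {β d : ℝ} (hβ : 0 < β)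
    (hd : 0 ≤ d) (hy : Monotone y) (hy0 : 0 ≤ y 0) (hg : MonotoneOn g (Icc (y 0) (y n)))
    (hgc : ContinuousOn g (Icc (y 0) (y n))) :
    stieltjesSum g (fun z => d * z ^ β) y y n ≤
        ∫ u in y 0..y n, g u * (d * β * u ^ (β - 1)) ∧
      ∫ u in y 0..y n, g u * (d * β * u ^ (β - 1)) ≤
        stieltjesSum g (fun z => d * z ^ β) y (fun k => y (k + 1)) n := by
  have hy0n := hy (Nat.zero_le n)
  have hw : ∀ u ∈ Icc (y 0) (y n), 0 ≤ d * β * u ^ (β - 1) := fun u hu =>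
    mul_nonneg (mul_nonneg hd hβ.le) (Real.rpow_nonneg (hy0.trans hu.1) _)
  have hwi : IntervalIntegrable (fun u => d * β * u ^ (β - 1)) volume (y 0) (y n) :=
    (intervalIntegral.intervalIntegrable_rpow' (by linarith)).const_mul _
  have hgwi := hwi.continuousOn_mul (by rwa [uIcc_of_le hy0n])
  have hW : ∀ a c : ℝ, ∫ u in a..c, d * β * u ^ (β - 1) = d * c ^ β - d * a ^ β := by
    intro a c
    rw [intervalIntegral.integral_const_mul, integral_rpow (Or.inl (by linarith)),
      sub_add_cancel]
    field_simp
  have hmem := fun k (hk : k < n) => hy.Icc_subset_Icc_succ hk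
  exact ⟨stieltjesSum_le_intervalIntegral hy hw hwi hgwi (fun k _ => hW _ _)
      fun k hk u hu => hg (hmem k hk (left_mem_Icc.2 (hy k.le_succ))) (hmem k hk hu) hu.1,
    intervalIntegral_le_stieltjesSum hy hw hwi hgwi (fun k _ => hW _ _)
      fun k hk u hu => hg (hmem k hk hu) (hmem k hk (right_mem_Icc.2 (hy k.le_succ))) hu.2⟩

noncomputable def uniformPartition (b : ℝ) (n k : ℕ) : ℝ := b * k / n

theorem uniformPartition_zero (b : ℝ) (n : ℕ) : uniformPartition b n 0 = 0 := by
  simp [uniformPartition]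

theorem uniformPartition_self (b : ℝ) {n : ℕ} (hn : n ≠ 0) : uniformPartition b n n = b := by
  simp [uniformPartition, hn]

theorem uniformPartition_succ (b : ℝ) (n k : ℕ) :
    uniformPartition b n (k + 1) = uniformPartition b n k + b / n := by
  simp only [uniformPartition]
  push_cast
  ring

theorem uniformPartition_nonneg {b : ℝ} (hb : 0 ≤ b) (n k : ℕ) : 0 ≤ uniformPartition b n k := by
  unfold uniformPartition
  positivity

theorem uniformPartition_monotone {b : ℝ} (hb : 0 ≤ b) (n : ℕ) :
    Monotone (uniformPartition b n) :=
  monotone_nat_of_le_succ fun k => by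
    rw [uniformPartition_succ]
    exact le_add_of_nonneg_right (by positivity)

theorem uniformPartition_mem_Icc {b : ℝ} (hb : 0 ≤ b) {n k : ℕ} (hn : n ≠ 0) (hk : k ≤ n) :
    uniformPartition b n k ∈ Icc 0 b :=
  ⟨uniformPartition_nonneg hb n k,
    (uniformPartition_monotone hb n hk).trans (uniformPartition_self b hn).le⟩

theorem rpow_uniformPartition_succ_sub_le {b β : ℝ} (hb : 0 ≤ b) (hβ0 : 0 < β) (hβ1 : β ≤ 1)
    (n k : ℕ) :
    0 ≤ uniformPartition b n (k + 1) ^ β - uniformPartition b n k ^ β ∧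
      uniformPartition b n (k + 1) ^ β - uniformPartition b n k ^ β ≤ (b / n) ^ β := by
  have hk := uniformPartition_nonneg hb n k
  refine ⟨sub_nonneg.2 (Real.rpow_le_rpow hk (uniformPartition_monotone hb n k.le_succ) hβ0.le),
    ?_⟩
  rw [sub_le_iff_le_add', uniformPartition_succ]
  exact Real.rpow_add_le_add_rpow hk (by positivity) hβ0.le hβ1

theorem exists_uniformPartition_stieltjesSum_approx {g : ℝ → ℝ} {b β d δ : ℝ} (hβ0 : 0 < β)
    (hβ1 : β ≤ 1) (hd : 0 ≤ d) (hb : 0 ≤ b) (hg : MonotoneOn g (Icc 0 b))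
    (hgc : ContinuousOn g (Icc 0 b)) (hδ : 0 < δ) :
    ∃ n : ℕ, n ≠ 0 ∧
      stieltjesSum g (fun z => d * z ^ β) (uniformPartition b n) (uniformPartition b n) n ≤
        d * β * ∫ u in 0..b, g u * u ^ (β - 1) ∧
      d * β * ∫ u in 0..b, g u * u ^ (β - 1) ≤ stieltjesSum g (fun z => d * z ^ β)
        (uniformPartition b n) (fun k => uniformPartition b n (k + 1)) n ∧
      stieltjesSum g (fun z => d * z ^ β)
          (uniformPartition b n) (fun k => uniformPartition b n (k + 1)) n -
        stieltjesSum g (fun z => d * z ^ β) (uniformPartition b n) (uniformPartition b n) n <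
          δ := by
  have hmesh : Tendsto (fun n : ℕ => d * (b / n) ^ β * (g b - g 0)) atTop (𝓝 0) := by
    have := ((Real.continuousAt_rpow_const 0 β (Or.inr hβ0.le)).tendsto.comp
      (tendsto_const_div_atTop_nhds_zero_nat b)).const_mul d |>.mul_const (g b - g 0)
    simpa [Real.zero_rpow hβ0.ne'] using this
  obtain ⟨n, hsmall, hn⟩ :=
    ((hmesh.eventually (gt_mem_nhds hδ)).and (eventually_ne_atTop 0)).exists
  set y := uniformPartition b n
  have hy : Monotone y := uniformPartition_monotone hb n
  have hy0 : y 0 = 0 := uniformPartition_zero b n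
  have hyn : y n = b := uniformPartition_self b hn
  have hmem : ∀ k ≤ n, y k ∈ Icc 0 b := fun k hk => uniformPartition_mem_Icc hb hn hk
  obtain ⟨hlow, hupp⟩ := stieltjesSum_rpow_le_integral (g := g) (n := n) hβ0 hd hy hy0.ge
    (by rwa [hy0, hyn]) (by rwa [hy0, hyn])
  have hint : ∫ u in 0..b, g u * (d * β * u ^ (β - 1)) =
      d * β * ∫ u in 0..b, g u * u ^ (β - 1) := by
    rw [← intervalIntegral.integral_const_mul]
    exact intervalIntegral.integral_congr fun u _ => by ring
  rw [hy0, hyn, hint] at hlow hupp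
  refine ⟨n, hn, hlow, hupp, lt_of_le_of_lt ?_ hsmall⟩
  calc _ ≤ d * (b / n) ^ β * (g (y n) - g (y 0)) := by
        refine stieltjesSum_succ_sub_le (fun k hk => hg (hmem k hk.le) (hmem _ hk) (hy k.le_succ))
          fun k _ => ?_
        obtain ⟨hinc0, hinc⟩ := rpow_uniformPartition_succ_sub_le hb hβ0 hβ1 n k
        rw [← mul_sub]
        exact ⟨mul_nonneg hd hinc0, mul_le_mul_of_nonneg_left hinc hd⟩
    _ = d * (b / n) ^ β * (g b - g 0) := by rw [hy0, hyn]

theorem tendsto_sq_div_of_regularlyVarying {mu : ℝ → ℝ} {ρ : ℝ}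
    (hmu : ∀ a > (0 : ℝ), Tendsto (fun t => mu (a * t) / mu t) atTop (𝓝 (a ^ ρ)))
    {a : ℝ} (ha : 0 < a) :
    Tendsto (fun t => (mu t / mu (t * a)) ^ 2) atTop (𝓝 (a ^ (-(2 * ρ)))) := by
  have := ((hmu a⁻¹ (inv_pos.2 ha)).comp (tendsto_id.atTop_mul_const ha)).pow 2
  rw [Real.inv_rpow ha.le, ← Real.rpow_neg ha.le, ← Real.rpow_natCast, ← Real.rpow_mul ha.le,
    Nat.cast_two, neg_mul, mul_comm] at this
  refine this.congr fun t => ?_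
  simp only [Function.comp_apply, id_eq, mul_comm t, inv_mul_cancel_left₀ ha.ne']

theorem tendsto_scaled_div_of_nonneg {f R : ℝ → ℝ} (hf : Monotone f) (hf0 : 0 ≤ f 0)
    (hR : ∀ t > (0 : ℝ), 0 < R t) {c β : ℝ} (hβ : 0 < β)
    (h : ∀ y > (0 : ℝ), Tendsto (fun t => f (t * y) / R t) atTop (𝓝 (c * y ^ β))) :
    ∀ y ≥ (0 : ℝ), Tendsto (fun t => f (t * y) / R t) atTop (𝓝 (c * y ^ β)) := by
  intro y hy
  rcases hy.lt_or_eq with hy | rfl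
  · exact h y hy
  simp only [mul_zero, Real.zero_rpow hβ.ne']
  refine tendsto_order.2 ⟨fun a ha => ?_, fun a ha => ?_⟩
  · filter_upwards [eventually_gt_atTop 0] with t ht
    exact ha.trans_le (div_nonneg hf0 (hR t ht).le)
  · have hc : Tendsto (fun z => c * z ^ β) (𝓝[>] 0) (𝓝 0) := by
      simpa [Real.zero_rpow hβ.ne'] using ((Real.continuousAt_rpow_const 0 β
        (Or.inr hβ.le)).tendsto.const_mul c).mono_left nhdsWithin_le_nhds
    obtain ⟨z, hza, hz⟩ := ((hc.eventually (gt_mem_nhds ha)).and self_mem_nhdsWithin).exists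
    filter_upwards [(h z hz).eventually (gt_mem_nhds hza), eventually_gt_atTop 0] with t ht ht0
    exact lt_of_le_of_lt (div_le_div_of_nonneg_right (hf (by positivity)) (hR t ht0).le) ht

theorem scaled_integral_bounds (f : StieltjesFunction ℝ) (hf : ∀ w < 0, f w = 0)
    {mu : ℝ → ℝ} (hmu : Monotone mu) (hmu1 : ∀ s, 1 ≤ mu s) {t r : ℝ} (ht : 0 < t) (hr : 0 < r)
    {y : ℕ → ℝ} (hy : Monotone y) (hy0 : y 0 = 0) (n : ℕ) :
    f 0 / r + stieltjesSum (fun z => (mu t / mu (t * (1 - z))) ^ 2) (fun z => f (t * z) / r)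
        y y n ≤ mu t ^ 2 / r * ∫ w in Icc 0 (t * y n), 1 / mu (t - w) ^ 2 ∂f.measure ∧
    mu t ^ 2 / r * ∫ w in Icc 0 (t * y n), 1 / mu (t - w) ^ 2 ∂f.measure ≤
      f 0 / r + stieltjesSum (fun z => (mu t / mu (t * (1 - z))) ^ 2) (fun z => f (t * z) / r)
        y (fun k => y (k + 1)) n := by
  set h : ℝ → ℝ := fun w => 1 / mu (t - w) ^ 2
  have hmu0 : ∀ s, 0 < mu s := fun s => one_pos.trans_le (hmu1 s)
  have hh : Monotone h := fun a b hab =>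
    one_div_le_one_div_of_le (pow_pos (hmu0 _) 2)
      (pow_le_pow_left₀ (hmu0 _).le (hmu (by linarith)) 2)
  have hx : Monotone fun k => t * y k := fun a b hab => mul_le_mul_of_nonneg_left (hy hab) ht.le
  have hint : IntegrableOn h (Icc (t * y 0) (t * y n)) f.measure :=
    Measure.integrableOn_of_bounded (M := 1) measure_Icc_lt_top.ne
      hh.measurable.aestronglyMeasurable (ae_of_all _ fun w => by
        rw [Real.norm_of_nonneg (by positivity)]
        exact div_le_one_of_le₀ (one_le_pow₀ (hmu1 _)) (by positivity))
  have hleft : Function.leftLim f 0 = 0 :=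
    leftLim_eq_of_tendsto (tendsto_const_nhds.congr' (eventually_nhdsWithin_of_forall
      fun w hw => (hf w hw).symm))
  have hscale : ∀ ξ : ℕ → ℝ, mu t ^ 2 / r * (h (t * y 0) * (f (t * y 0) -
      Function.leftLim f (t * y 0)) + stieltjesSum h f (fun k => t * y k) (fun k => t * ξ k) n) =
      f 0 / r + stieltjesSum (fun z => (mu t / mu (t * (1 - z))) ^ 2) (fun z => f (t * z) / r)
        y ξ n := by
    intro ξ
    simp only [stieltjesSum, hy0, mul_zero, hleft, h, sub_zero, mul_add, Finset.mul_sum]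
    have := (hmu0 t).ne'
    congr 1
    · field_simp
    · refine Finset.sum_congr rfl fun k _ => ?_
      rw [show t - t * ξ k = t * (1 - ξ k) by ring]
      field_simp
  have hc : 0 ≤ mu t ^ 2 / r := by positivity
  have hx0 : t * y 0 = 0 := by rw [hy0, mul_zero]
  rw [← hscale, ← hscale, ← hx0]
  exact ⟨mul_le_mul_of_nonneg_left (f.stieltjesSum_le_setIntegral_Icc hx hint
      fun k _ u hu => hh hu.1) hc,
    mul_le_mul_of_nonneg_left (f.setIntegral_Icc_le_stieltjesSum hx hint
      fun k _ u hu => hh hu.2) hc⟩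

theorem monotoneOn_one_sub_rpow {p b : ℝ} (hp : p ≤ 0) (hb : b < 1) :
    MonotoneOn (fun u => (1 - u) ^ p) (Icc 0 b) := fun _ _ _ hv huv =>
  Real.rpow_le_rpow_of_nonpos (by linarith [hv.2]) (by linarith) hp

theorem continuousOn_one_sub_rpow (p : ℝ) {b : ℝ} (hb : b < 1) :
    ContinuousOn (fun u => (1 - u) ^ p) (Icc 0 b) := fun _ hu =>
  (continuousAt_const.sub continuousAt_id).rpow_const
    (Or.inl (sub_ne_zero.2 (hu.2.trans_lt hb).ne')) |>.continuousWithinAt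

theorem nonneg_of_tendsto_div {f R : ℝ → ℝ} (hf : Monotone f) (hf0 : 0 ≤ f 0)
    (hR : ∀ t > (0 : ℝ), 0 < R t) {c : ℝ} (h : Tendsto (fun t => f t / R t) atTop (𝓝 c)) :
    0 ≤ c :=
  ge_of_tendsto h <| (eventually_gt_atTop 0).mono fun t ht =>
    div_nonneg (hf0.trans (hf ht.le)) (hR t ht).le

theorem tendsto_scaled_stieltjesSum {f R mu : ℝ → ℝ} {c β p : ℝ} (hβ : 0 < β)
    (hF : ∀ z ≥ (0 : ℝ), Tendsto (fun t => f (t * z) / R t) atTop (𝓝 (c * z ^ β)))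
    (hmu : ∀ z < (1 : ℝ), Tendsto (fun t => (mu t / mu (t * (1 - z))) ^ 2) atTop (𝓝 ((1 - z) ^ p)))
    {x ξ : ℕ → ℝ} {n : ℕ} (hx : ∀ k ≤ n, 0 ≤ x k) (hξ : ∀ k < n, ξ k < 1) :
    Tendsto (fun t => f 0 / R t +
      stieltjesSum (fun z => (mu t / mu (t * (1 - z))) ^ 2) (fun z => f (t * z) / R t) x ξ n)
      atTop (𝓝 (stieltjesSum (fun z => (1 - z) ^ p) (fun z => c * z ^ β) x ξ n)) := by
  simpa [Real.zero_rpow hβ.ne'] using (hF 0 le_rfl).add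
    (tendsto_stieltjesSum (fun k hk => hmu _ (hξ k hk)) fun k hk => hF _ (hx k hk))

theorem inter25_general (β Γβ : ℝ) (hβ : β ∈ Set.Ioc (0:ℝ) 1)
    (U : Fin 2 → Fin 2 → StieltjesFunction ℝ)
    (hU0 : ∀ i j t, t < 0 → U i j t = 0)
    (R : ℝ → ℝ) (hRpos : ∀ t > (0:ℝ), 0 < R t)
    (D : Matrix (Fin 2) (Fin 2) ℝ)
    (hUlim : ∀ y > (0:ℝ), ∀ i j,
      Tendsto (fun t => U i j (t * y) / R t) atTop (nhds (Γβ * D i j * y ^ β)))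
    (mu : ℝ → ℝ) (hmuMono : Monotone mu) (hmu1 : ∀ t, 1 ≤ mu t)
    (hmurv : ∀ a > (0:ℝ), Tendsto (fun t => mu (a * t) / mu t) atTop (nhds (a ^ (1 - β))))
    (ε : ℝ) (hε : ε ∈ Set.Ioo (0:ℝ) 1) :
    ∀ i j, Tendsto
      (fun t => (mu t) ^ 2 / R t *
        ∫ w in Set.Icc (0:ℝ) (t * (1 - ε)), (1 / (mu (t - w)) ^ 2) ∂(U i j).measure)
      atTop
      (nhds (β * Γβ * D i j * ∫ y in (0:ℝ)..(1 - ε), (1 - y) ^ (2 * β - 2) * y ^ (β - 1))) := by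
  obtain ⟨hβ0, hβ1⟩ := hβ
  intro i j
  set b := 1 - ε
  have hb0 : 0 ≤ b := by linarith [hε.2]
  have hb1 : b < 1 := by linarith [hε.1]
  have hf0 : 0 ≤ U i j 0 := (hU0 i j (-1) (by norm_num)).symm.le.trans ((U i j).mono (by norm_num))
  have hF := tendsto_scaled_div_of_nonneg (U i j).mono hf0 hRpos hβ0 fun y hy => hUlim y hy i j
  have hd := nonneg_of_tendsto_div (U i j).mono hf0 hRpos (by simpa using hF 1 zero_le_one)
  have hmu : ∀ z < 1, Tendsto (fun t => (mu t / mu (t * (1 - z))) ^ 2) atTop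
      (𝓝 ((1 - z) ^ (2 * β - 2))) := fun z hz => by
    simpa [show -(2 * (1 - β)) = 2 * β - 2 by ring] using
      tendsto_sq_div_of_regularlyVarying hmurv (sub_pos.2 hz)
  rw [mul_assoc β, mul_comm β]
  refine tendsto_of_forall_sandwich fun δ hδ => ?_
  obtain ⟨n, hn, hlow, hupp, hgap⟩ := exists_uniformPartition_stieltjesSum_approx hβ0 hβ1 hd hb0
    (monotoneOn_one_sub_rpow (p := 2 * β - 2) (by linarith) hb1)
    (continuousOn_one_sub_rpow _ hb1) hδ
  have hy := uniformPartition_monotone hb0 n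
  have hyb : ∀ k ≤ n, uniformPartition b n k ∈ Icc 0 b := fun k hk =>
    uniformPartition_mem_Icc hb0 hn hk
  refine ⟨_, _, _, _, tendsto_scaled_stieltjesSum hβ0 hF hmu (fun k hk => (hyb k hk).1)
      fun k hk => (hyb k hk.le).2.trans_lt hb1,
    tendsto_scaled_stieltjesSum hβ0 hF hmu (fun k hk => (hyb k hk).1)
      fun k hk => (hyb _ hk).2.trans_lt hb1, hlow, hupp, hgap, ?_⟩
  filter_upwards [eventually_gt_atTop 0] with t ht
  simpa [uniformPartition_self b hn] using scaled_integral_bounds (U i j) (hU0 i j) hmuMono hmu1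
    ht (hRpos t ht) hy (uniformPartition_zero b n) n

/-- Convergence step (inter25): if `U_I(ty)/R(t) → Γ_β D y^β` with `R` regularly varying
of index `β ∈ (0,1]`, and `μ̂₂ ≥ 1` is nondecreasing and regularly varying of index
`1-β`, then for fixed `ε ∈ (0,1)`,
`(μ̂₂²(t)/R(t)) ∫₀^{1-ε} μ̂₂(t(1-y))^{-2} dU_I(ty)
  → βΓ_β D ∫₀^{1-ε} (1-y)^{2β-2} y^{β-1} dy`. -/
theorem inter25 (β Γβ : ℝ) (hβ : β ∈ Set.Ioc (0:ℝ) 1) (hΓ : 0 < Γβ)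
    (U : Fin 2 → Fin 2 → StieltjesFunction ℝ)
    (hU0 : ∀ i j t, t < 0 → U i j t = 0)
    (R : ℝ → ℝ) (hRpos : ∀ t > (0:ℝ), 0 < R t)
    (hRrv : ∀ a > (0:ℝ), Tendsto (fun t => R (a * t) / R t) atTop (nhds (a ^ β)))
    (D : Matrix (Fin 2) (Fin 2) ℝ)
    (hUlim : ∀ y > (0:ℝ), ∀ i j,
      Tendsto (fun t => U i j (t * y) / R t) atTop (nhds (Γβ * D i j * y ^ β)))
    (mu : ℝ → ℝ) (hmuMono : Monotone mu) (hmu1 : ∀ t, 1 ≤ mu t)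
    (hmurv : ∀ a > (0:ℝ), Tendsto (fun t => mu (a * t) / mu t) atTop (nhds (a ^ (1 - β))))
    (ε : ℝ) (hε : ε ∈ Set.Ioo (0:ℝ) 1) :
    ∀ i j, Tendsto
      (fun t => (mu t) ^ 2 / R t *
        ∫ w in Set.Icc (0:ℝ) (t * (1 - ε)), (1 / (mu (t - w)) ^ 2) ∂(U i j).measure)
      atTop
      (nhds (β * Γβ * D i j * ∫ y in (0:ℝ)..(1 - ε), (1 - y) ^ (2 * β - 2) * y ^ (β - 1))) :=
  inter25_general β Γβ hβ U hU0 R hRpos D hUlim mu hmuMono hmu1 hmurv ε hε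
end
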